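/- arXiv:2210.10852 — 7 statements merged into one kernel-verified Lean document; each statement's English description precedes it below -/
import Mathlib

section
/- For any binary vector A = (A_1, …, A_p), the following are equivalent: (1) the matrix E[A^⊗ A^⊗ᵀ] is positive definite; (2) P(A = v) > 0 for every one of the 2^p vectors v ∈ {-1, 1}^p; (3) the σ-field σ(A_1, …, A_p) contains exactly 2^{2^p} distinct events, and every one of these events other than the empty set has positive probability. -/
/-!
Write `X = (A_i > 0)_i` for the sign pattern of `A` and `w_b = P(X = b)`. The power vector is
`A^⊗ = H(X)`, where the rows `H(b) = (∏_{i ∈ S} b_i)_S` form the Walsh–Hadamard matrix `H`, whose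
characters are orthogonal both ways: `Hᵀ H = H Hᵀ = 2^p I`. Hence `E[A^⊗ A^⊗ᵀ] = Hᵀ diag(w) H` is
positive definite iff `diag(w)` is, i.e. iff every cell `{X = b}` has positive mass. On the other
side, `σ(A) = σ(X)` consists of the preimages `X⁻¹ B`; there are `2^(2^p)` of them iff `X` is onto,
and each nonempty one has positive mass iff each nonempty atom `X⁻¹ {b}` has.
-/

open MeasureTheory Matrix

section SignVectors

variable {ι : Type*}

def signVector (b : ι → Bool) (i : ι) : ℝ := if b i then 1 else -1

noncomputable def signPattern (x : ι → ℝ) (i : ι) : Bool := decide (0 < x i)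

theorem signVector_eq_neg_one_or_eq_one (b : ι → Bool) (i : ι) :
    signVector b i = -1 ∨ signVector b i = 1 := by
  unfold signVector; split_ifs <;> simp

theorem signPattern_signVector (b : ι → Bool) : signPattern (signVector b) = b := by
  funext i; unfold signPattern signVector; cases b i <;> norm_num

theorem signVector_signPattern {x : ι → ℝ} (hx : ∀ i, x i = -1 ∨ x i = 1) :
    signVector (signPattern x) = x := by
  funext i; unfold signPattern signVector; rcases hx i with h | h <;> norm_num [h]

theorem signPattern_eq_iff {x : ι → ℝ} (hx : ∀ i, x i = -1 ∨ x i = 1) (b : ι → Bool) :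
    signPattern x = b ↔ x = signVector b := by
  constructor
  · rintro rfl; exact (signVector_signPattern hx).symm
  · rintro rfl; exact signPattern_signVector b

theorem forall_signVector_iff {P : (ι → ℝ) → Prop} :
    (∀ x : ι → ℝ, (∀ i, x i = -1 ∨ x i = 1) → P x) ↔ ∀ b, P (signVector b) :=
  ⟨fun h b => h _ (signVector_eq_neg_one_or_eq_one b),
    fun h _ hx => signVector_signPattern hx ▸ h _⟩

theorem signVector_mul_signVector (b b' : ι → Bool) (i : ι) :
    signVector b i * signVector b' i = if b i = b' i then 1 else -1 := by
  unfold signVector; cases b i <;> cases b' i <;> norm_num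

end SignVectors

section Walsh

variable (ι : Type*) [Fintype ι]

def walshMatrix : Matrix (ι → Bool) (Finset ι) ℝ :=
  Matrix.of fun b S => ∏ i ∈ S, signVector b i

variable {ι}

theorem walshMatrix_transpose_mul_self [DecidableEq ι] :
    (walshMatrix ι)ᵀ * walshMatrix ι = (2 ^ Fintype.card ι : ℝ) • 1 := by
  ext S T
  let f (i : ι) (y : Bool) : ℝ :=
    (if i ∈ S then (if y then 1 else -1) else 1) * (if i ∈ T then (if y then 1 else -1) else 1)
  have hprod (b : ι → Bool) :
      (∏ i ∈ S, signVector b i) * ∏ i ∈ T, signVector b i = ∏ i, f i (b i) := by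
    change _ = ∏ i, (if i ∈ S then signVector b i else 1) * (if i ∈ T then signVector b i else 1)
    rw [Finset.prod_mul_distrib, Fintype.prod_extend_by_one, Fintype.prod_extend_by_one]
  have hfactor (i : ι) : ∑ y, f i y = if (i ∈ S ↔ i ∈ T) then 2 else 0 := by
    by_cases hS : i ∈ S <;> by_cases hT : i ∈ T <;> norm_num [f, hS, hT]
  simp only [mul_apply, transpose_apply, walshMatrix, of_apply, hprod]
  rw [← Fintype.prod_sum, Finset.prod_congr rfl fun i _ => hfactor i, Finset.prod_ite_zero]
  simp [Finset.ext_iff, one_apply]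

theorem walshMatrix_mul_transpose_self :
    walshMatrix ι * (walshMatrix ι)ᵀ = (2 ^ Fintype.card ι : ℝ) • 1 := by
  ext b b'
  have hfactor (i : ι) : 1 + signVector b i * signVector b' i = if b i = b' i then 2 else 0 := by
    rw [signVector_mul_signVector]; split_ifs <;> norm_num
  simp only [mul_apply, transpose_apply, walshMatrix, of_apply, ← Finset.prod_mul_distrib]
  rw [← Finset.powerset_univ, ← Finset.prod_one_add, Finset.prod_congr rfl fun i _ => hfactor i,
    Finset.prod_ite_zero]
  simp [funext_iff, one_apply]

end Walsh

theorem Matrix.posDef_transpose_mul_mul_iff {m n : Type*} [Fintype m] [Fintype n]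
    [DecidableEq m] [DecidableEq n] {W : Matrix m n ℝ} {c : ℝ} (hc : c ≠ 0)
    (hWtW : Wᵀ * W = c • 1) (hWWt : W * Wᵀ = c • 1) {D : Matrix m m ℝ} :
    (Wᵀ * D * W).PosDef ↔ D.PosDef := by
  constructor
  · intro h
    have hW : Function.Injective W.vecMul := fun x y hxy => by
      simpa [vecMul_vecMul, hWWt, vecMul_smul, smul_right_injective _ hc |>.eq_iff] using
        congrArg (vecMul · Wᵀ) hxy
    have hcD : W * (Wᵀ * D * W) * Wᵀ = (c * c) • D := by
      calc W * (Wᵀ * D * W) * Wᵀ = (W * Wᵀ) * D * (W * Wᵀ) := by simp only [Matrix.mul_assoc]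
        _ = (c * c) • D := by simp [hWWt, smul_smul]
    have := (h.mul_mul_conjTranspose_same hW).smul (inv_pos.mpr (mul_self_pos.mpr hc))
    rwa [conjTranspose_eq_transpose_of_trivial, hcD, smul_smul,
      inv_mul_cancel₀ (mul_self_ne_zero.mpr hc), one_smul] at this
  · intro h
    have hW : Function.Injective W.mulVec := fun x y hxy => by
      simpa [mulVec_mulVec, hWtW, smul_mulVec, smul_right_injective _ hc |>.eq_iff] using
        congrArg (Wᵀ *ᵥ ·) hxy
    simpa [conjTranspose_eq_transpose_of_trivial] using h.conjTranspose_mul_mul_same hW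

theorem posDef_transpose_walshMatrix_mul_diagonal_mul_iff {ι : Type*} [Fintype ι]
    [DecidableEq ι] (w : (ι → Bool) → ℝ) :
    ((walshMatrix ι)ᵀ * diagonal w * walshMatrix ι).PosDef ↔ ∀ b, 0 < w b := by
  rw [posDef_transpose_mul_mul_iff (by positivity) walshMatrix_transpose_mul_self
    walshMatrix_mul_transpose_self, posDef_diagonal_iff]

section Measure

variable {Ω : Type*}

theorem integral_comp_eq_sum_measureReal_preimage {E α : Type*} [NormedAddCommGroup E]
    [NormedSpace ℝ E] [CompleteSpace E] [Fintype α] [MeasurableSpace α] [DiscreteMeasurableSpace α]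
    [MeasurableSpace Ω] (μ : Measure Ω) [IsFiniteMeasure μ] {X : Ω → α} (hX : Measurable X)
    (f : α → E) :
    ∫ ω, f (X ω) ∂μ = ∑ a, μ.real (X ⁻¹' {a}) • f a := by
  rw [← integral_map hX.aemeasurable StronglyMeasurable.of_discrete.aestronglyMeasurable,
    integral_fintype .of_finite]
  simp [measureReal_def, Measure.map_apply hX (measurableSet_singleton _)]

theorem card_measurableSet_comap_eq_iff_surjective {α : Type*} [Finite α] [MeasurableSpace α]
    [DiscreteMeasurableSpace α] (X : Ω → α) :
    Nat.card {s // MeasurableSet[MeasurableSpace.comap X ‹_›] s} = 2 ^ Nat.card α ↔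
      Function.Surjective X := by
  have hcomap : {s // MeasurableSet[MeasurableSpace.comap X ‹_›] s} ≃ Set.range (Set.preimage X) :=
    Equiv.subtypeEquivRight fun s => by
      simp only [MeasurableSpace.measurableSet_comap, Set.mem_range]
      exact ⟨fun ⟨B, _, hB⟩ => ⟨B, hB⟩, fun ⟨B, hB⟩ => ⟨B, .of_discrete, hB⟩⟩
  have hcard : Nat.card (Set α) = 2 ^ Nat.card α := by
    cases nonempty_fintype α
    simp [Nat.card_eq_fintype_card, Fintype.card_set]
  rw [Nat.card_congr hcomap, ← Set.preimage_injective, ← hcard, Nat.card_coe_set_eq,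
    ← Set.image_univ, ← Set.ncard_univ, Set.ncard_image_iff, Set.injOn_univ]

theorem forall_measurableSet_comap_pos_iff {α : Type*} [MeasurableSpace α]
    [DiscreteMeasurableSpace α] [MeasurableSpace Ω] (μ : Measure Ω) (X : Ω → α) :
    (∀ s, MeasurableSet[MeasurableSpace.comap X ‹_›] s → s ≠ ∅ → 0 < μ s) ↔
      ∀ ω, 0 < μ (X ⁻¹' {X ω}) := by
  simp only [MeasurableSpace.measurableSet_comap, MeasurableSet.of_discrete, true_and,
    forall_exists_index, forall_apply_eq_imp_iff, ← Set.nonempty_iff_ne_empty]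
  refine ⟨fun h ω => h _ ⟨ω, rfl⟩, fun h B ⟨ω, hω⟩ => ?_⟩
  exact (h ω).trans_le (measure_mono (Set.preimage_mono (Set.singleton_subset_iff.mpr hω)))

theorem card_measurableSet_comap_eq_and_pos_iff {α : Type*} [Finite α] [MeasurableSpace α]
    [DiscreteMeasurableSpace α] [MeasurableSpace Ω] (μ : Measure Ω) (X : Ω → α) :
    (Nat.card {s // MeasurableSet[MeasurableSpace.comap X ‹_›] s} = 2 ^ Nat.card α ∧
        ∀ s, MeasurableSet[MeasurableSpace.comap X ‹_›] s → s ≠ ∅ → 0 < μ s) ↔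
      ∀ a, 0 < μ (X ⁻¹' {a}) := by
  rw [card_measurableSet_comap_eq_iff_surjective, forall_measurableSet_comap_pos_iff]
  refine ⟨fun ⟨hX, hpos⟩ a => ?_, fun h => ⟨fun a => ?_, fun ω => h _⟩⟩
  · obtain ⟨ω, rfl⟩ := hX a
    exact hpos ω
  · exact nonempty_of_measure_ne_zero (h a).ne'

variable {ι : Type*} {A : ι → Ω → ℝ}

theorem measurable_signPattern {m : MeasurableSpace Ω} (hA : ∀ i, Measurable (A i)) :
    Measurable fun ω => signPattern (A · ω) :=
  measurable_pi_lambda _ fun i => measurable_to_bool <| by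
    simpa only [signPattern, Set.preimage, Set.mem_singleton_iff, decide_eq_true_eq] using
      measurableSet_lt measurable_const (hA i)

theorem iSup_comap_eq_comap_signPattern [Finite ι] (hA : ∀ i ω, A i ω = -1 ∨ A i ω = 1) :
    ⨆ i, MeasurableSpace.comap (A i) inferInstance =
      MeasurableSpace.comap (fun ω => signPattern (A · ω)) inferInstance := by
  refine le_antisymm (iSup_le fun i => ?_) (measurable_signPattern fun i => ?_).comap_le
  · have hAi : A i = (fun b => signVector b i) ∘ fun ω => signPattern (A · ω) :=
      funext fun ω => (congrFun (signVector_signPattern (hA · ω)) i).symm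
    rw [hAi, ← MeasurableSpace.comap_comp]
    exact MeasurableSpace.comap_mono Measurable.of_discrete.comap_le
  · exact (comap_measurable (A i)).mono (le_iSup (fun j => MeasurableSpace.comap (A j) _) i) le_rfl

theorem secondMoment_eq_transpose_walshMatrix_mul_diagonal_mul [Fintype ι] [DecidableEq ι]
    [MeasurableSpace Ω] (μ : Measure Ω) [IsFiniteMeasure μ] (hAmeas : ∀ i, Measurable (A i))
    (hA : ∀ i ω, A i ω = -1 ∨ A i ω = 1) :
    Matrix.of (fun S T : Finset ι => ∫ ω, (∏ i ∈ S, A i ω) * (∏ i ∈ T, A i ω) ∂μ) =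
      (walshMatrix ι)ᵀ *
        diagonal (fun b => μ.real ((fun ω => signPattern (A · ω)) ⁻¹' {b})) * walshMatrix ι := by
  ext S T
  have hAω (ω : Ω) (i : ι) : A i ω = signVector (signPattern (A · ω)) i :=
    (congrFun (signVector_signPattern (hA · ω)) i).symm
  calc ∫ ω, (∏ i ∈ S, A i ω) * (∏ i ∈ T, A i ω) ∂μ
      = ∫ ω, (fun b => (∏ i ∈ S, signVector b i) * ∏ i ∈ T, signVector b i)
          (signPattern (A · ω)) ∂μ := by
        congr 1 with ω
        congr 1 <;> exact Finset.prod_congr rfl fun i _ => hAω ω i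
    _ = ∑ b, μ.real ((fun ω => signPattern (A · ω)) ⁻¹' {b}) •
          ((∏ i ∈ S, signVector b i) * ∏ i ∈ T, signVector b i) :=
        integral_comp_eq_sum_measureReal_preimage μ (measurable_signPattern hAmeas)
          fun b => (∏ i ∈ S, signVector b i) * ∏ i ∈ T, signVector b i
    _ = _ := by
        rw [mul_apply]
        simp only [mul_diagonal, transpose_apply, walshMatrix, of_apply, smul_eq_mul]
        exact Finset.sum_congr rfl fun b _ => by ring

end Measure

/-- **Nondegeneracy of a binary vector** (Lemma 2). For a binary random vector
`A = (A_1, …, A_p)`, the following are equivalent: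
(1) the second moment matrix `E[A^⊗ A^⊗ᵀ]` is positive definite;
(2) `P(A = v) > 0` for every one of the `2^p` vectors `v ∈ {-1,1}^p`;
(3) the σ-field `σ(A_1, …, A_p)` contains exactly `2^(2^p)` distinct events, and every one
of these events other than the empty set has positive probability.
Here the power vector `A^⊗` is indexed by subsets `S ⊆ {1, …, p}`, with entries
`∏_{i ∈ S} A_i`. -/
theorem binary_vector_nondegeneracy_tfae
    {Ω : Type*} [MeasurableSpace Ω] (μ : Measure Ω) [IsProbabilityMeasure μ]
    {p : ℕ} (A : Fin p → Ω → ℝ)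
    (hAmeas : ∀ i, Measurable (A i))
    (hAbin : ∀ i ω, A i ω = -1 ∨ A i ω = 1) :
    List.TFAE
      [ -- (1) E[A^⊗ A^⊗ᵀ] is positive definite
        Matrix.PosDef
          (Matrix.of fun S T : Finset (Fin p) =>
            ∫ ω, (∏ i ∈ S, A i ω) * (∏ i ∈ T, A i ω) ∂μ),
        -- (2) every cell has positive probability
        ∀ v : Fin p → ℝ, (∀ i, v i = -1 ∨ v i = 1) →
          0 < μ {ω | ∀ i, A i ω = v i},
        -- (3) σ(A) has exactly 2^(2^p) events, all nonempty ones of positive probability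
        (Nat.card {s : Set Ω //
            MeasurableSet[⨆ i, MeasurableSpace.comap (A i) inferInstance] s}
          = 2 ^ (2 ^ p)) ∧
        (∀ s : Set Ω,
            MeasurableSet[⨆ i, MeasurableSpace.comap (A i) inferInstance] s →
            s ≠ ∅ → 0 < μ s) ] := by
  have hcell (b : Fin p → Bool) :
      (fun ω => signPattern (A · ω)) ⁻¹' {b} = {ω | ∀ i, A i ω = signVector b i} :=
    Set.ext fun ω => (signPattern_eq_iff (hAbin · ω) b).trans funext_iff
  have hcells : (∀ v : Fin p → ℝ, (∀ i, v i = -1 ∨ v i = 1) →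
      0 < μ {ω | ∀ i, A i ω = v i}) ↔
      ∀ b, 0 < μ ((fun ω => signPattern (A · ω)) ⁻¹' {b}) := by
    simp only [forall_signVector_iff, hcell]
  tfae_have 1 ↔ 2 := by
    rw [secondMoment_eq_transpose_walshMatrix_mul_diagonal_mul μ hAmeas hAbin,
      posDef_transpose_walshMatrix_mul_diagonal_mul_iff, hcells]
    simp only [measureReal_def, ENNReal.toReal_pos_iff, measure_lt_top, and_true]
  tfae_have 2 ↔ 3 := by
    rw [hcells, iSup_comap_eq_comap_signPattern hAbin]
    simpa using (card_measurableSet_comap_eq_and_pos_iff μ fun ω => signPattern (A · ω)).symm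
  tfae_finish
end

section
/- Two binary vectors A = (A_1, …, A_{p_1}) and B = (B_1, …, B_{p_2}) defined on the same probability space are independent (as random vectors) if and only if Cov(A^⊗_i, B^⊗_j) = 0 for every coordinate pair (A^⊗_i, B^⊗_j) of their power vectors. -/
/-! Every real function on the cube `{-1, 1}^p` is a linear combination of the monomials
`x ↦ ∏ i ∈ S, x i`: expand the vertex indicators `∏ i, (1 + a i * x i) / 2`. So for binary
vectors `A`, `B` every `φ (A ω)` and `ψ (B ω)` is a finite linear combination of coordinates of
the power vectors, and their uncorrelatedness extends bilinearly to
`E[φ(A) ψ(B)] = E[φ(A)] E[ψ(B)]` for all measurable `φ`, `ψ`, which characterises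
independence. -/

open MeasureTheory ProbabilityTheory Finset

section WalshExpansion

variable {ι : Type*}

lemma prod_one_add_mul_div_two_eq_ite [Fintype ι] {a x : ι → ℝ}
    (ha : ∀ i, a i = -1 ∨ a i = 1) (hx : ∀ i, x i = -1 ∨ x i = 1) :
    ∏ i, (1 + a i * x i) / 2 = if a = x then 1 else 0 := by
  have factor : ∀ i, (1 + a i * x i) / 2 = if a i = x i then 1 else 0 := by
    intro i
    rcases ha i with h | h <;> rcases hx i with h' | h' <;> norm_num [h, h']
  simp only [factor, Fintype.prod_boole, funext_iff]

theorem exists_walsh_expansion [Fintype ι] (φ : (ι → ℝ) → ℝ) :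
    ∃ c : Finset ι → ℝ, ∀ x : ι → ℝ, (∀ i, x i = -1 ∨ x i = 1) →
      φ x = ∑ S, c S * ∏ i ∈ S, x i := by
  classical
  set cube := Fintype.piFinset fun _ : ι => ({-1, 1} : Finset ℝ)
  have mem_cube {a : ι → ℝ} : a ∈ cube ↔ ∀ i, a i = -1 ∨ a i = 1 := by simp [cube]
  refine ⟨fun S => ∑ a ∈ cube, φ a * (∏ i ∈ S, a i) / 2 ^ Fintype.card ι, fun x hx => ?_⟩
  have indicator_expansion : ∀ a ∈ cube, (if a = x then 1 else 0 : ℝ)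
      = ∑ S, (∏ i ∈ S, a i) / 2 ^ Fintype.card ι * ∏ i ∈ S, x i := by
    intro a ha
    rw [← prod_one_add_mul_div_two_eq_ite (mem_cube.1 ha) hx, prod_div_distrib, prod_const,
      card_univ, prod_one_add, powerset_univ, sum_div]
    refine sum_congr rfl fun S _ => ?_
    rw [prod_mul_distrib]; ring
  calc φ x = ∑ a ∈ cube, φ a * if a = x then 1 else 0 := by
        simp [mem_cube.2 hx]
    _ = ∑ a ∈ cube, ∑ S, φ a * ((∏ i ∈ S, a i) / 2 ^ Fintype.card ι * ∏ i ∈ S, x i) :=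
        sum_congr rfl fun a ha => by rw [indicator_expansion a ha, mul_sum]
    _ = _ := by
        rw [sum_comm]
        simp_rw [sum_mul]
        refine sum_congr rfl fun S _ => sum_congr rfl fun a _ => by ring

lemma norm_prod_eq_one_of_forall {x : ι → ℝ} (hx : ∀ i, x i = -1 ∨ x i = 1)
    (S : Finset ι) : ‖∏ i ∈ S, x i‖ = 1 := by
  rw [norm_prod]
  exact prod_eq_one fun i _ => by rcases hx i with h | h <;> simp [h]

end WalshExpansion

section Integral

variable {Ω : Type*} [MeasurableSpace Ω] {μ : Measure Ω}

lemma integral_sum_mul_sum_eq_mul_of_forall_integral_mul {ι κ : Type*} [Fintype ι] [Fintype κ]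
    {u : ι → Ω → ℝ} {v : κ → Ω → ℝ} (c : ι → ℝ) (d : κ → ℝ)
    (hu : ∀ i, Integrable (u i) μ) (hv : ∀ j, Integrable (v j) μ)
    (huv : ∀ i j, Integrable (fun ω => u i ω * v j ω) μ)
    (h : ∀ i j, ∫ ω, u i ω * v j ω ∂μ = (∫ ω, u i ω ∂μ) * ∫ ω, v j ω ∂μ) :
    ∫ ω, (∑ i, c i * u i ω) * (∑ j, d j * v j ω) ∂μ
      = (∫ ω, ∑ i, c i * u i ω ∂μ) * ∫ ω, ∑ j, d j * v j ω ∂μ := by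
  have expand : ∀ ω, (∑ i, c i * u i ω) * (∑ j, d j * v j ω)
      = ∑ i, ∑ j, c i * d j * (u i ω * v j ω) := fun ω => by
    simp only [sum_mul_sum, mul_mul_mul_comm]
  simp_rw [expand]
  rw [integral_finsetSum _ fun i _ => integrable_finsetSum _ fun j _ => (huv i j).const_mul _,
    integral_finsetSum _ fun i _ => (hu i).const_mul _,
    integral_finsetSum _ fun j _ => (hv j).const_mul _, sum_mul_sum]
  refine sum_congr rfl fun i _ => ?_
  rw [integral_finsetSum _ fun j _ => (huv i j).const_mul _]
  refine sum_congr rfl fun j _ => ?_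
  rw [integral_const_mul, integral_const_mul, integral_const_mul, h, mul_mul_mul_comm]

lemma integrable_prod_of_forall_eq_neg_one_or_one [IsFiniteMeasure μ] {ι : Type*}
    {C : ι → Ω → ℝ} (hC : ∀ i, Measurable (C i)) (hbin : ∀ i ω, C i ω = -1 ∨ C i ω = 1)
    (S : Finset ι) : Integrable (fun ω => ∏ i ∈ S, C i ω) μ :=
  .of_bound (by fun_prop) 1 (.of_forall fun ω => (norm_prod_eq_one_of_forall (hbin · ω) S).le)

end Integral

/-- **Independence is equivalent to uncorrelation of power vectors** (Theorem 1, part 1).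
Two binary vectors `A = (A_1, …, A_{p₁})` and `B = (B_1, …, B_{p₂})` on the same probability
space are independent (as random vectors) if and only if `Cov(A^⊗_S, B^⊗_T) = 0` for every
pair of coordinates of their power vectors, i.e.
`E[A^⊗_S B^⊗_T] = E[A^⊗_S] E[B^⊗_T]` for all `S ⊆ {1,…,p₁}`, `T ⊆ {1,…,p₂}`. -/
theorem indep_iff_powerVec_uncorrelated
    {Ω : Type*} [MeasurableSpace Ω] (μ : Measure Ω) [IsProbabilityMeasure μ]
    {p₁ p₂ : ℕ} (A : Fin p₁ → Ω → ℝ) (B : Fin p₂ → Ω → ℝ)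
    (hAmeas : ∀ i, Measurable (A i)) (hBmeas : ∀ j, Measurable (B j))
    (hAbin : ∀ i ω, A i ω = -1 ∨ A i ω = 1)
    (hBbin : ∀ j ω, B j ω = -1 ∨ B j ω = 1) :
    IndepFun (fun ω i => A i ω) (fun ω j => B j ω) μ ↔
      ∀ (S : Finset (Fin p₁)) (T : Finset (Fin p₂)),
        ∫ ω, (∏ i ∈ S, A i ω) * (∏ j ∈ T, B j ω) ∂μ
          = (∫ ω, ∏ i ∈ S, A i ω ∂μ) * (∫ ω, ∏ j ∈ T, B j ω ∂μ) := by
  have hX : Measurable fun ω i => A i ω := measurable_pi_lambda _ hAmeas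
  have hY : Measurable fun ω j => B j ω := measurable_pi_lambda _ hBmeas
  have intA := integrable_prod_of_forall_eq_neg_one_or_one (μ := μ) hAmeas hAbin
  have intB := integrable_prod_of_forall_eq_neg_one_or_one (μ := μ) hBmeas hBbin
  have intAB (S T) : Integrable (fun ω => (∏ i ∈ S, A i ω) * ∏ j ∈ T, B j ω) μ :=
    (intB T).bdd_mul (by fun_prop)
      (.of_forall fun ω => (norm_prod_eq_one_of_forall (hAbin · ω) S).le)
  constructor
  · intro h S T
    exact h.integral_fun_comp_mul_comp hX.aemeasurable hY.aemeasurable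
      (f := fun x => ∏ i ∈ S, x i) (g := fun y => ∏ j ∈ T, y j) (by fun_prop) (by fun_prop)
  · intro h
    refine (indepFun_iff_integral_comp_mul (hfm := hX) (hgm := hY)).2 fun {φ ψ} _ _ _ _ => ?_
    obtain ⟨c, hc⟩ := exists_walsh_expansion φ
    obtain ⟨d, hd⟩ := exists_walsh_expansion ψ
    rw [show φ ∘ _ = _ from funext fun ω => hc _ (hAbin · ω),
      show ψ ∘ _ = _ from funext fun ω => hd _ (hBbin · ω)]
    exact integral_sum_mul_sum_eq_mul_of_forall_integral_mul c d intA intB intAB h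
end

section
/- Let A = (A_1, …, A_p) be a nondegenerate binary vector, let H be a subgroup of G_A, and let k be the integer with |H| = 2^k. Then there exists S ⊆ G_A with |S| = k and ⟨S⟩ = H such that the random vector formed by the elements of S takes 2^k distinct values, each with positive probability. Furthermore, for any T ⊆ G_A with |T| < k, σ(T) ≠ σ(H). -/
/-!
Identify `{-1, 1}`-valued products with their exponent vectors: the parity character
`χ s = ∏ i, A i ^ s i` maps `(ZMod 2)^p` onto `G_A`. For every linear functional `F` on
`(ZMod 2)^p`, nondegeneracy gives positive probability to the event `A i = (-1) ^ F (e i)` for all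
`i`, on which `χ s = (-1) ^ F s` for every `s` simultaneously. Hence `χ` is injective, `H` is the
image of a `k`-dimensional subspace `W`, and the image `S` of a basis of `W` generates `H`; since
any values of `F` on that basis can be prescribed, each of the `2 ^ k` sign patterns of `S` has
positive probability. If `|T| < k`, the span of the exponents of `T` misses some `h ∈ W`, and a
functional vanishing on that span with `F h = 1` produces two outcomes which every element of `T`
takes to the same value but `χ h` does not; so `σ(T)` cannot contain the event `{χ h = -1}` of
`σ(H)`.
-/

open MeasureTheory

/-- The σ-field generated by a set of real-valued functions. -/
def sigmaGen {Ω : Type*} (S : Set (Ω → ℝ)) : MeasurableSpace Ω :=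
  ⨆ g ∈ S, MeasurableSpace.comap g inferInstance

namespace GroupDataReduction

open Module

lemma val_nsmul_eq_smul {n : ℕ} [NeZero n] {V : Type*} [AddCommGroup V] [Module (ZMod n) V]
    (c : ZMod n) (x : V) : c.val • x = c • x := by
  rw [← Nat.cast_smul_eq_nsmul (ZMod n), ZMod.natCast_zmod_val]

lemma _root_.AddChar.map_sum_eq_prod {A M ι : Type*} [AddCommMonoid A] [CommMonoid M]
    (ψ : AddChar A M) (s : Finset ι) (f : ι → A) : ψ (∑ i ∈ s, f i) = ∏ i ∈ s, ψ (f i) := by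
  classical
  induction s using Finset.induction_on with
  | empty => simp
  | insert i s hi ih => rw [Finset.sum_insert hi, Finset.prod_insert hi, ψ.map_add_eq_mul, ih]

noncomputable def signChar : AddChar (ZMod 2) ℝ := AddChar.zmodChar 2 neg_one_sq

lemma zmod_two_eq_zero_or_one : ∀ c : ZMod 2, c = 0 ∨ c = 1 := by decide

@[simp] lemma signChar_zero : signChar 0 = 1 := signChar.map_zero_eq_one

@[simp] lemma signChar_one : signChar 1 = -1 := by
  simp [signChar, AddChar.zmodChar_apply, show (1 : ZMod 2).val = 1 from rfl]

lemma signChar_injective : Function.Injective signChar := by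
  intro a b h
  rcases zmod_two_eq_zero_or_one a with rfl | rfl <;>
    rcases zmod_two_eq_zero_or_one b with rfl | rfl <;> first | rfl | norm_num at h

lemma exists_signChar_eq {x : ℝ} (hx : x = -1 ∨ x = 1) : ∃ c, signChar c = x := by
  rcases hx with rfl | rfl
  exacts [⟨1, signChar_one⟩, ⟨0, signChar_zero⟩]

lemma signChar_eq_neg_one_or_one (c : ZMod 2) : signChar c = -1 ∨ signChar c = 1 := by
  rcases zmod_two_eq_zero_or_one c with rfl | rfl <;> simp

lemma _root_.AddChar.apply_eq_neg_one_or_one {V Ω : Type*} [AddCommGroup V] [Module (ZMod 2) V]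
    (ψ : AddChar V (Ω → ℝ)) (s : V) (ω : Ω) : ψ s ω = -1 ∨ ψ s ω = 1 := by
  have hsq : ψ s * ψ s = 1 := by
    rw [← AddChar.map_add_eq_mul, ← two_smul (ZMod 2), show (2 : ZMod 2) = 0 from rfl, zero_smul,
      AddChar.map_zero_eq_one]
  exact (mul_self_eq_one_iff.1 (congrFun hsq ω)).symm

section SigmaGen

variable {Ω : Type*}

lemma sigmaGen_eq_comap (T : Set (Ω → ℝ)) :
    sigmaGen T = MeasurableSpace.comap (fun ω (g : T) => (g : Ω → ℝ) ω) MeasurableSpace.pi := by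
  simp_rw [MeasurableSpace.pi, MeasurableSpace.comap_iSup, MeasurableSpace.comap_comp]
  exact iSup_subtype'

lemma exists_ne_of_sigmaGen_le {T H : Set (Ω → ℝ)} (hle : sigmaGen H ≤ sigmaGen T) {g : Ω → ℝ}
    (hg : g ∈ H) {ω₁ ω₂ : Ω} (hne : g ω₁ ≠ g ω₂) : ∃ g' ∈ T, g' ω₁ ≠ g' ω₂ := by
  by_contra! hT
  have hH : MeasurableSet[sigmaGen H] (g ⁻¹' {g ω₁}) :=
    le_iSup₂ (f := fun g (_ : g ∈ H) => MeasurableSpace.comap g inferInstance) g hg _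
      ⟨{g ω₁}, measurableSet_singleton _, rfl⟩
  have hTmeas := hle _ hH
  rw [sigmaGen_eq_comap] at hTmeas
  obtain ⟨s, -, hs⟩ := hTmeas
  have hω₂ : ω₂ ∈ g ⁻¹' {g ω₁} := by
    have hω₁ : ω₁ ∈ g ⁻¹' {g ω₁} := rfl
    rw [← hs] at hω₁ ⊢
    simpa only [Set.mem_preimage, fun g' : T => hT g' g'.2] using hω₁
  exact hne hω₂.symm

end SigmaGen

lemma card_sign_patterns_of_pos {ι Ω : Type*} [Fintype ι] [MeasurableSpace Ω] (μ : Measure Ω)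
    (f : ι → Ω → ℝ) (hf : ∀ i ω, f i ω = -1 ∨ f i ω = 1)
    (hpos : ∀ v : ι → ℝ, (∀ i, v i = -1 ∨ v i = 1) → 0 < μ {ω | ∀ i, f i ω = v i}) :
    Nat.card {v : ι → ℝ // 0 < μ {ω | ∀ i, f i ω = v i}} = 2 ^ Fintype.card ι := by
  have hiff (v : ι → ℝ) : 0 < μ {ω | ∀ i, f i ω = v i} ↔ ∀ i, v i ∈ ({-1, 1} : Set ℝ) := by
    refine ⟨fun h i => ?_, hpos v⟩
    obtain ⟨ω, hω⟩ := nonempty_of_measure_ne_zero h.ne'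
    exact hω i ▸ hf i ω
  rw [Nat.card_congr ((Equiv.subtypeEquivRight hiff).trans Equiv.subtypePiEquivPi), Nat.card_pi,
    Nat.card_coe_set_eq, Set.ncard_pair (by norm_num), Finset.prod_const, Finset.card_univ]

section Realization

variable {Ω V : Type*} [MeasurableSpace Ω] [AddCommGroup V] [Module (ZMod 2) V]

def RealizesAllSignChars (μ : Measure Ω) (χ : AddChar V (Ω → ℝ)) : Prop :=
  ∀ F : Module.Dual (ZMod 2) V, 0 < μ {ω | ∀ s, χ s ω = signChar (F s)}

variable {μ : Measure Ω} {χ : AddChar V (Ω → ℝ)}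

lemma RealizesAllSignChars.exists_apply_eq (hχ : RealizesAllSignChars μ χ)
    (F : Module.Dual (ZMod 2) V) : ∃ ω, ∀ s, χ s ω = signChar (F s) :=
  nonempty_of_measure_ne_zero (hχ F).ne'

lemma RealizesAllSignChars.injective (hχ : RealizesAllSignChars μ χ) : Function.Injective χ := by
  intro s t hst
  by_contra hne
  obtain ⟨F, hF⟩ := Module.Projective.exists_dual_ne_zero (ZMod 2) (sub_ne_zero.2 hne)
  obtain ⟨ω, hω⟩ := hχ.exists_apply_eq F
  apply hF
  rw [map_sub, sub_eq_zero]
  exact signChar_injective (by rw [← hω, ← hω, hst])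

end Realization

section ParityChar

variable {ι M : Type*} [Fintype ι] [CommMonoid M] (A : ι → M) (hA : ∀ i, A i ^ 2 = 1)

def parityChar : AddChar (ι → ZMod 2) M where
  toFun s := ∏ i, AddChar.zmodChar 2 (hA i) (s i)
  map_zero_eq_one' := by simp
  map_add_eq_mul' s t := by
    simp only [Pi.add_apply, AddChar.map_add_eq_mul, Finset.prod_mul_distrib]

lemma parityChar_apply (s : ι → ZMod 2) : parityChar A hA s = ∏ i, A i ^ (s i).val := rfl

lemma parityChar_apply_eq_prod_filter [DecidableEq ι] (s : ι → ZMod 2) :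
    parityChar A hA s = ∏ i with s i = 1, A i := by
  rw [parityChar_apply, Finset.prod_filter]
  refine Finset.prod_congr rfl fun i _ => ?_
  rcases zmod_two_eq_zero_or_one (s i) with h | h <;> simp [h, show (1 : ZMod 2).val = 1 from rfl]

lemma range_parityChar : Set.range (parityChar A hA) = {g | ∃ T : Finset ι, g = ∏ i ∈ T, A i} := by
  classical
  ext g
  constructor
  · rintro ⟨s, rfl⟩
    exact ⟨_, parityChar_apply_eq_prod_filter A hA s⟩
  · rintro ⟨T, rfl⟩
    refine ⟨fun i => if i ∈ T then 1 else 0, ?_⟩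
    rw [parityChar_apply_eq_prod_filter]
    congr 1
    ext i
    by_cases hi : i ∈ T <;> simp [hi]

end ParityChar

lemma realizesAllSignChars_parityChar {ι Ω : Type*} [Fintype ι] [MeasurableSpace Ω]
    (μ : Measure Ω) (A : ι → Ω → ℝ) (hA : ∀ i, A i ^ 2 = 1)
    (hnondeg : ∀ v : ι → ℝ, (∀ i, v i = -1 ∨ v i = 1) → 0 < μ {ω | ∀ i, A i ω = v i}) :
    RealizesAllSignChars μ (parityChar A hA) := by
  classical
  intro F
  set u : ι → ZMod 2 := fun i => F fun j => if i = j then 1 else 0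
  refine (hnondeg (fun i => signChar (u i)) fun i => signChar_eq_neg_one_or_one (u i)).trans_le
    (measure_mono fun ω hω s => ?_)
  rw [parityChar_apply, Finset.prod_apply, F.pi_apply_eq_sum_univ, AddChar.map_sum_eq_prod]
  refine Finset.prod_congr rfl fun i _ => ?_
  rw [Pi.pow_apply, hω i, ← AddChar.map_nsmul_eq_pow, val_nsmul_eq_smul]

section ExponentSubmodule

variable {V M : Type*} [AddCommGroup V] [Module (ZMod 2) V] [Monoid M] (ψ : AddChar V M)

def exponentSubmodule (H : Submonoid M) : Submodule (ZMod 2) V where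
  carrier := ψ ⁻¹' H
  zero_mem' := by simp [H.one_mem]
  add_mem' {x y} hx hy := by simpa [ψ.map_add_eq_mul] using H.mul_mem hx hy
  smul_mem' c x hx := by simpa [← val_nsmul_eq_smul, ψ.map_nsmul_eq_pow] using H.pow_mem hx _

lemma mem_closure_image_of_mem_span {s : Set V} {x : V} (hx : x ∈ Submodule.span (ZMod 2) s) :
    ψ x ∈ Submonoid.closure (ψ '' s) := by
  induction hx using Submodule.span_induction with
  | mem x hx => exact Submonoid.subset_closure (Set.mem_image_of_mem ψ hx)
  | zero => simp
  | add x y _ _ hx hy => simpa [ψ.map_add_eq_mul] using Submonoid.mul_mem _ hx hy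
  | smul c x _ hx =>
    simpa [← val_nsmul_eq_smul, ψ.map_nsmul_eq_pow] using Submonoid.pow_mem _ hx _

variable {ψ} {H : Submonoid M} (hH : (H : Set M) ⊆ Set.range ψ)
include hH

lemma closure_range_basis_eq {κ : Type*} (b : Basis κ (ZMod 2) (exponentSubmodule ψ H)) :
    Submonoid.closure (Set.range fun j => ψ (b j)) = H := by
  refine le_antisymm (Submonoid.closure_le.2 (Set.range_subset_iff.2 fun j => (b j).2))
    fun h hh => ?_
  obtain ⟨x, rfl⟩ := hH hh
  have hspan := Submodule.apply_mem_span_image_of_mem_span (exponentSubmodule ψ H).subtype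
    (b.mem_span ⟨x, hh⟩)
  rw [← Set.range_comp] at hspan
  have hcl := mem_closure_image_of_mem_span ψ hspan
  rw [← Set.range_comp] at hcl
  exact hcl

lemma finrank_exponentSubmodule [Finite V] (hinj : Function.Injective ψ) {k : ℕ}
    (hk : Nat.card H = 2 ^ k) : finrank (ZMod 2) (exponentSubmodule ψ H) = k := by
  have hcard : Nat.card (exponentSubmodule ψ H) = Nat.card H := calc
    _ = Nat.card (ψ '' (ψ ⁻¹' H)) := (Nat.card_image_of_injective hinj _).symm
    _ = Nat.card H := by rw [Set.image_preimage_eq_of_subset hH]; rfl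
  apply Nat.pow_right_injective le_rfl
  change 2 ^ _ = 2 ^ k
  rw [← hk, ← hcard, Module.natCard_eq_pow_finrank (K := ZMod 2), Nat.card_zmod]

end ExponentSubmodule

lemma exists_dual_apply_basis_eq {K V κ : Type*} [Field K] [AddCommGroup V] [Module K V]
    {W : Submodule K V} (b : Basis κ K W) (ε : κ → K) :
    ∃ F : Module.Dual K V, ∀ j, F (b j) = ε j := by
  obtain ⟨F, hF⟩ := LinearMap.exists_extend (b.constr K ε)
  exact ⟨F, fun j => by rw [← b.constr_basis K ε j, ← hF]; rfl⟩

namespace RealizesAllSignChars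

variable {Ω V : Type*} [MeasurableSpace Ω] [AddCommGroup V] [Module (ZMod 2) V]
  {μ : Measure Ω} {χ : AddChar V (Ω → ℝ)} (hχ : RealizesAllSignChars μ χ)
include hχ

lemma measure_pos_basis {κ : Type*} {W : Submodule (ZMod 2) V} (b : Basis κ (ZMod 2) W)
    (v : κ → ℝ) (hv : ∀ j, v j = -1 ∨ v j = 1) : 0 < μ {ω | ∀ j, χ (b j) ω = v j} := by
  choose ε hε using fun j => exists_signChar_eq (hv j)
  obtain ⟨F, hF⟩ := exists_dual_apply_basis_eq b ε
  refine (hχ F).trans_le (measure_mono fun ω hω j => ?_)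
  rw [hω, hF, hε]

lemma card_sign_patterns_of_coe_eq_range {κ : Type*} {W : Submodule (ZMod 2) V}
    (b : Basis κ (ZMod 2) W) {S : Finset (Ω → ℝ)}
    (hS : (S : Set (Ω → ℝ)) = Set.range fun j => χ (b j)) :
    Nat.card {v : {g // g ∈ S} → ℝ //
      0 < μ {ω | ∀ g : {g // g ∈ S}, (g : Ω → ℝ) ω = v g}} = 2 ^ S.card := by
  have hmem (j : κ) : χ (b j) ∈ S := by simp [← Finset.mem_coe, hS]
  rw [card_sign_patterns_of_pos, Fintype.card_coe]
  · rintro ⟨g, hg⟩ ω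
    obtain ⟨j, rfl⟩ : g ∈ Set.range fun j => χ (b j) := hS ▸ hg
    exact χ.apply_eq_neg_one_or_one _ ω
  · intro v hv
    refine (hχ.measure_pos_basis b (fun j => v ⟨χ (b j), hmem j⟩) fun j => hv _).trans_le
      (measure_mono fun ω hω => ?_)
    rintro ⟨g, hg⟩
    obtain ⟨j, rfl⟩ : g ∈ Set.range fun j => χ (b j) := hS ▸ hg
    exact hω j

theorem exists_finset_closure_eq [Finite V] {H : Submonoid (Ω → ℝ)}
    (hH : (H : Set (Ω → ℝ)) ⊆ Set.range χ) {k : ℕ}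
    (hk : finrank (ZMod 2) (exponentSubmodule χ H) = k) :
    ∃ S : Finset (Ω → ℝ), (S : Set (Ω → ℝ)) ⊆ Set.range χ ∧ S.card = k ∧
      Submonoid.closure (S : Set (Ω → ℝ)) = H ∧
      Nat.card {v : {g // g ∈ S} → ℝ //
        0 < μ {ω | ∀ g : {g // g ∈ S}, (g : Ω → ℝ) ω = v g}} = 2 ^ k := by
  classical
  let b := Module.finBasisOfFinrankEq (ZMod 2) _ hk
  have hinj : Function.Injective fun j => χ (b j) :=
    hχ.injective.comp (Subtype.val_injective.comp b.injective)
  set S := Finset.univ.image fun j => χ (b j)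
  have hS : (S : Set (Ω → ℝ)) = Set.range fun j => χ (b j) := by simp [S]
  have hcard : S.card = k := by
    rw [Finset.card_image_of_injective _ hinj, Finset.card_univ, Fintype.card_fin]
  refine ⟨S, hS ▸ Set.range_comp_subset_range _ _, hcard, hS ▸ closure_range_basis_eq hH b, ?_⟩
  rw [hχ.card_sign_patterns_of_coe_eq_range b hS, hcard]

lemma exists_separated_pair [Finite V] {W : Submodule (ZMod 2) V} {t : Finset V}
    (ht : t.card < finrank (ZMod 2) W) :
    ∃ ω₁ ω₂, (∀ s ∈ t, χ s ω₁ = χ s ω₂) ∧ ∃ h ∈ W, χ h ω₁ ≠ χ h ω₂ := by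
  have hnle : ¬ W ≤ Submodule.span (ZMod 2) (t : Set V) := fun hle =>
    ((Submodule.finrank_mono hle).trans (finrank_span_finset_le_card t)).not_gt ht
  obtain ⟨h, hW, hU⟩ := SetLike.not_le_iff_exists.1 hnle
  obtain ⟨F, hFh, hFU⟩ := Submodule.exists_dual_map_eq_bot_of_notMem hU inferInstance
  obtain ⟨ω₁, hω₁⟩ := hχ.exists_apply_eq F
  obtain ⟨ω₂, hω₂⟩ := hχ.exists_apply_eq 0
  refine ⟨ω₁, ω₂, fun s hs => ?_, h, hW, ?_⟩
  · have hFs := Submodule.mem_map_of_mem (f := F) (Submodule.subset_span hs)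
    rw [hFU, Submodule.mem_bot] at hFs
    rw [hω₁, hω₂, hFs, LinearMap.zero_apply]
  · rw [hω₁, hω₂, LinearMap.zero_apply]
    exact signChar_injective.ne hFh

theorem sigmaGen_ne_of_card_lt [Finite V] {H : Submonoid (Ω → ℝ)} {T : Finset (Ω → ℝ)}
    (hT : (T : Set (Ω → ℝ)) ⊆ Set.range χ)
    (hTk : T.card < finrank (ZMod 2) (exponentSubmodule χ H)) :
    sigmaGen (T : Set (Ω → ℝ)) ≠ sigmaGen H := by
  classical
  have hcard : (T.image (Function.invFun χ)).card < _ := T.card_image_le.trans_lt hTk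
  obtain ⟨ω₁, ω₂, hagree, h, hH, hne⟩ := hχ.exists_separated_pair hcard
  intro heq
  obtain ⟨g, hg, hgne⟩ := exists_ne_of_sigmaGen_le heq.ge hH hne
  have hagree_g := hagree _ (Finset.mem_image_of_mem _ hg)
  rw [Function.invFun_eq (hT hg)] at hagree_g
  exact hgne hagree_g

end RealizesAllSignChars

end GroupDataReduction

open GroupDataReduction in
theorem group_data_reduction_general
    {Ω : Type*} [MeasurableSpace Ω] (μ : Measure Ω)
    {p : ℕ} (A : Fin p → Ω → ℝ)
    (hAbin : ∀ i ω, A i ω = -1 ∨ A i ω = 1)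
    (hnondeg : ∀ v : Fin p → ℝ, (∀ i, v i = -1 ∨ v i = 1) →
      0 < μ {ω | ∀ i, A i ω = v i})
    (GA : Set (Ω → ℝ))
    (hGA : GA = {g | ∃ T : Finset (Fin p), g = fun ω => ∏ i ∈ T, A i ω})
    (H : Submonoid (Ω → ℝ)) (hH : (H : Set (Ω → ℝ)) ⊆ GA)
    (k : ℕ) (hk : Nat.card H = 2 ^ k) :
    (∃ S : Finset (Ω → ℝ), (S : Set (Ω → ℝ)) ⊆ GA ∧ S.card = k ∧
      Submonoid.closure (S : Set (Ω → ℝ)) = H ∧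
      Nat.card {v : {g // g ∈ S} → ℝ //
        0 < μ {ω | ∀ g : {g // g ∈ S}, (g : Ω → ℝ) ω = v g}} = 2 ^ k) ∧
    (∀ T : Finset (Ω → ℝ), (T : Set (Ω → ℝ)) ⊆ GA → T.card < k →
      sigmaGen (T : Set (Ω → ℝ)) ≠ sigmaGen (H : Set (Ω → ℝ))) := by
  have hA : ∀ i, A i ^ 2 = 1 := fun i => funext fun ω => by
    rcases hAbin i ω with h | h <;> simp [h]
  have hGA_range : GA = Set.range (parityChar A hA) := by
    simp_rw [hGA, range_parityChar, Finset.prod_fn]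
  have hχ := realizesAllSignChars_parityChar μ A hA hnondeg
  rw [hGA_range] at hH ⊢
  have hrank := finrank_exponentSubmodule hH hχ.injective hk
  exact ⟨hχ.exists_finset_closure_eq hH hrank,
    fun T hT hTk => hχ.sigmaGen_ne_of_card_lt hT (hrank ▸ hTk)⟩

/-- **Group data reduction** (Theorem 4).
Let `A = (A_1, …, A_p)` be a nondegenerate binary vector, let `H` be a subgroup of `G_A`
(the group of all products `∏_{i ∈ T} A_i` under pointwise multiplication), and let `k` be
the integer with `|H| = 2^k`.  Then there exists `S ⊆ G_A` with `|S| = k` and `⟨S⟩ = H`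
such that the random vector formed by the elements of `S` takes `2^k` distinct values, each
with positive probability.  Furthermore, for any `T ⊆ G_A` with `|T| < k`,
`σ(T) ≠ σ(H)`. -/
theorem group_data_reduction
    {Ω : Type*} [MeasurableSpace Ω] (μ : Measure Ω) [IsProbabilityMeasure μ]
    {p : ℕ} (A : Fin p → Ω → ℝ)
    (hAmeas : ∀ i, Measurable (A i))
    (hAbin : ∀ i ω, A i ω = -1 ∨ A i ω = 1)
    (hnondeg : ∀ v : Fin p → ℝ, (∀ i, v i = -1 ∨ v i = 1) →
      0 < μ {ω | ∀ i, A i ω = v i})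
    (GA : Set (Ω → ℝ))
    (hGA : GA = {g | ∃ T : Finset (Fin p), g = fun ω => ∏ i ∈ T, A i ω})
    (H : Submonoid (Ω → ℝ)) (hH : (H : Set (Ω → ℝ)) ⊆ GA)
    (k : ℕ) (hk : Nat.card H = 2 ^ k) :
    (∃ S : Finset (Ω → ℝ), (S : Set (Ω → ℝ)) ⊆ GA ∧ S.card = k ∧
      Submonoid.closure (S : Set (Ω → ℝ)) = H ∧
      Nat.card {v : {g // g ∈ S} → ℝ //
        0 < μ {ω | ∀ g : {g // g ∈ S}, (g : Ω → ℝ) ω = v g}} = 2 ^ k) ∧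
    (∀ T : Finset (Ω → ℝ), (T : Set (Ω → ℝ)) ⊆ GA → T.card < k →
      sigmaGen (T : Set (Ω → ℝ)) ≠ sigmaGen (H : Set (Ω → ℝ))) :=
  group_data_reduction_general μ A hAbin hnondeg GA hGA H hH k hk
end

section
/- Let B ∈ {-1, 1} and let A = (A_1, …, A_p) be a nondegenerate binary vector on the same probability space, with E[B | A] = βᵀ A^⊗ almost surely. Let L = {Λ ∈ G_A : β_Λ ≠ 0} be the set of coordinates of A^⊗ with nonzero BELIEF coefficient, and let G_L = ⟨L⟩. Then B is conditionally independent of σ(G_A) given σ(G_L). -/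
open MeasureTheory

/-- Conditional independence of the σ-fields `m₁` and `m₂` given the σ-field `m`, under `μ`:
for all `m₁`-measurable `s` and `m₂`-measurable `t`,
`E[1_{s ∩ t} | m] = E[1_s | m] · E[1_t | m]` a.e. -/
noncomputable def CondIndepSigma {Ω : Type*} [MeasurableSpace Ω] (μ : Measure Ω)
    (m m₁ m₂ : MeasurableSpace Ω) : Prop :=
  ∀ s t : Set Ω, MeasurableSet[m₁] s → MeasurableSet[m₂] t →
    μ[(s ∩ t).indicator (fun _ => (1 : ℝ)) | m] =ᵐ[μ]
      fun ω => (μ[s.indicator (fun _ => (1 : ℝ)) | m]) ω *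
        (μ[t.indicator (fun _ => (1 : ℝ)) | m]) ω

/-!
Write `m_L = σ(G_L)` and `m_A = σ(G_A)`. Since `m_A` is generated by the `A_i`, the hypothesis
says `E[B | m_A] = ∑ β_S A^S`, and every summand with `β_S ≠ 0` lies in `L`, so `E[B | m_A]` is
already `m_L`-measurable. Because `B` takes only the values `±1`, every `σ(B)`-measurable
indicator is an affine function `a + b B`, so its conditional expectation given `m_A` is
`m_L`-measurable as well. The tower property and pulling out `m_L`-measurable factors then give
`E[1_s 1_t | m_L] = E[1_s | m_L] E[1_t | m_L]` for `s ∈ σ(B)`, `t ∈ m_A`.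
-/

section SigmaGen

variable {Ω : Type*}

lemma sigmaGen_le {S : Set (Ω → ℝ)} {m : MeasurableSpace Ω} (h : ∀ g ∈ S, Measurable[m] g) :
    sigmaGen S ≤ m :=
  iSup₂_le fun g hg => (h g hg).comap_le

lemma measurable_of_mem_sigmaGen {S : Set (Ω → ℝ)} {g : Ω → ℝ} (hg : g ∈ S) :
    Measurable[sigmaGen S] g :=
  measurable_iff_comap_le.mpr <|
    le_iSup₂ (f := fun g _ => MeasurableSpace.comap g inferInstance) g hg

lemma sigmaGen_closure_le {S : Set (Ω → ℝ)} {m : MeasurableSpace Ω}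
    (h : ∀ g ∈ S, Measurable[m] g) : sigmaGen (Submonoid.closure S : Set (Ω → ℝ)) ≤ m := by
  refine sigmaGen_le fun g hg => ?_
  induction hg using Submonoid.closure_induction with
  | mem g hg => exact h g hg
  | one => exact measurable_const
  | mul g g' _ _ hg hg' => exact hg.mul hg'

lemma sigmaGen_prod_eq_iSup_comap {ι : Type*} (A : ι → Ω → ℝ) :
    sigmaGen {g : Ω → ℝ | ∃ S : Finset ι, g = fun ω => ∏ i ∈ S, A i ω} =
      ⨆ i, MeasurableSpace.comap (A i) inferInstance := by
  classical
  apply le_antisymm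
  · refine sigmaGen_le fun g ⟨S, hg⟩ => hg ▸ Finset.measurable_prod S fun i _ => ?_
    exact measurable_iff_comap_le.mpr (le_iSup (fun i => MeasurableSpace.comap (A i) _) i)
  · refine iSup_le fun i => Measurable.comap_le ?_
    simpa using measurable_of_mem_sigmaGen (S := {g : Ω → ℝ | ∃ S : Finset ι,
      g = fun ω => ∏ i ∈ S, A i ω}) ⟨{i}, by simp⟩

end SigmaGen

section CondExp

variable {Ω : Type*} {m m₁ m₂ m₀ : MeasurableSpace Ω} {μ : Measure[m₀] Ω} [IsFiniteMeasure μ]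

theorem condExp_mul_eq_mul_of_aestronglyMeasurable_condExp (hm : m ≤ m₂) (hm₂ : m₂ ≤ m₀)
    {X Y : Ω → ℝ} (hX : Integrable X μ) (hY : Integrable Y μ) (hXY : Integrable (X * Y) μ)
    (hYm : StronglyMeasurable[m₂] Y) (hXm : AEStronglyMeasurable[m] (μ[X | m₂]) μ) :
    μ[X * Y | m] =ᵐ[μ] μ[X | m] * μ[Y | m] := by
  have hX_tower : μ[X | m] =ᵐ[μ] μ[X | m₂] :=
    (condExp_condExp_of_le hm hm₂).symm.trans
      (condExp_of_aestronglyMeasurable' (hm.trans hm₂) hXm integrable_condExp)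
  have hpull : μ[X * Y | m₂] =ᵐ[μ] μ[X | m₂] * Y :=
    condExp_mul_of_stronglyMeasurable_right hYm hXY hX
  calc μ[X * Y | m] =ᵐ[μ] μ[μ[X * Y | m₂] | m] := (condExp_condExp_of_le hm hm₂).symm
    _ =ᵐ[μ] μ[μ[X | m₂] * Y | m] := condExp_congr_ae hpull
    _ =ᵐ[μ] μ[X | m₂] * μ[Y | m] :=
      condExp_mul_of_aestronglyMeasurable_left hXm (integrable_condExp.congr hpull) hY
    _ =ᵐ[μ] μ[X | m] * μ[Y | m] := hX_tower.symm.mul Filter.EventuallyEq.rfl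

theorem condIndepSigma_of_aestronglyMeasurable_condExp_indicator (hm : m ≤ m₂)
    (hm₁ : m₁ ≤ m₀) (hm₂ : m₂ ≤ m₀)
    (h : ∀ s, MeasurableSet[m₁] s →
      AEStronglyMeasurable[m] (μ[s.indicator (fun _ => (1 : ℝ)) | m₂]) μ) :
    CondIndepSigma μ m m₁ m₂ := by
  intro s t hs ht
  have hind : ∀ {m' : MeasurableSpace Ω} {u : Set Ω}, MeasurableSet[m'] u →
      StronglyMeasurable[m'] (u.indicator fun _ => (1 : ℝ)) :=
    fun hu => (measurable_const.indicator hu).stronglyMeasurable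
  have hint : ∀ {u : Set Ω}, MeasurableSet u → Integrable (u.indicator fun _ => (1 : ℝ)) μ :=
    fun hu => (integrable_const 1).indicator hu
  have hst : (s ∩ t).indicator (fun _ => (1 : ℝ)) =
      s.indicator (fun _ => 1) * t.indicator (fun _ => 1) := Set.inter_indicator_one
  rw [hst]
  exact condExp_mul_eq_mul_of_aestronglyMeasurable_condExp hm hm₂ (hint (hm₁ s hs))
    (hint (hm₂ t ht)) (hst ▸ hint ((hm₁ s hs).inter (hm₂ t ht))) (hind ht) (h s hs)

end CondExp

section TwoValued

variable {Ω : Type*} {B : Ω → ℝ}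

lemma exists_comp_eq_affine_of_sign (hB : ∀ ω, B ω = -1 ∨ B ω = 1) (φ : ℝ → ℝ) :
    ∃ a b : ℝ, φ ∘ B = fun ω => a + b * B ω := by
  refine ⟨(φ 1 + φ (-1)) / 2, (φ 1 - φ (-1)) / 2, funext fun ω => ?_⟩
  rcases hB ω with h | h <;> simp only [Function.comp_apply, h] <;> ring

variable {m m₂ m₀ : MeasurableSpace Ω} {μ : Measure[m₀] Ω} [IsFiniteMeasure μ]

lemma aestronglyMeasurable_condExp_indicator_of_sign (hm₂ : m₂ ≤ m₀) (hBm : Measurable B)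
    (hB : ∀ ω, B ω = -1 ∨ B ω = 1) (hBcond : AEStronglyMeasurable[m] (μ[B | m₂]) μ)
    {s : Set Ω} (hs : MeasurableSet[MeasurableSpace.comap B inferInstance] s) :
    AEStronglyMeasurable[m] (μ[s.indicator (fun _ => (1 : ℝ)) | m₂]) μ := by
  obtain ⟨E, -, rfl⟩ := hs
  obtain ⟨a, b, hab⟩ := exists_comp_eq_affine_of_sign hB (E.indicator fun _ => 1)
  have hBint : Integrable B μ := .of_bound hBm.aestronglyMeasurable 1 <|
    .of_forall fun ω => by rcases hB ω with h | h <;> simp [h]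
  have haffine : μ[(fun _ => a) + b • B | m₂] =ᵐ[μ] (fun _ => a) + b • μ[B | m₂] := by
    refine (condExp_add (integrable_const a) (hBint.smul b) m₂).trans ?_
    rw [condExp_const hm₂]
    exact Filter.EventuallyEq.rfl.add (condExp_smul b B m₂)
  have hind : (B ⁻¹' E).indicator (fun _ => (1 : ℝ)) = (fun _ => a) + b • B := hab
  rw [hind]
  exact (aestronglyMeasurable_const.add (hBcond.const_smul b)).congr haffine.symm

end TwoValued

theorem belief_nonzero_slopes_conditional_independence_general
    {Ω : Type*} [MeasurableSpace Ω] (μ : Measure Ω) [IsProbabilityMeasure μ]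
    {p : ℕ} (A : Fin p → Ω → ℝ) (B : Ω → ℝ)
    (hAmeas : ∀ i, Measurable (A i)) (hBmeas : Measurable B)
    (hBbin : ∀ ω, B ω = -1 ∨ B ω = 1)
    (β : Finset (Fin p) → ℝ)
    (hβ : μ[B | ⨆ i, MeasurableSpace.comap (A i) inferInstance]
      =ᵐ[μ] fun ω => ∑ S : Finset (Fin p), β S * ∏ i ∈ S, A i ω) :
    CondIndepSigma μ
      -- the conditioning σ-field σ(G_L), where G_L = ⟨L⟩, L = {Λ ∈ G_A : β_Λ ≠ 0}
      (sigmaGen (Submonoid.closure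
        {g : Ω → ℝ | ∃ S : Finset (Fin p), β S ≠ 0 ∧ g = fun ω => ∏ i ∈ S, A i ω}
        : Set (Ω → ℝ)))
      -- the σ-field generated by B
      (MeasurableSpace.comap B inferInstance)
      -- the σ-field σ(G_A)
      (sigmaGen {g : Ω → ℝ | ∃ S : Finset (Fin p), g = fun ω => ∏ i ∈ S, A i ω}) := by
  set L := {g : Ω → ℝ | ∃ S : Finset (Fin p), β S ≠ 0 ∧ g = fun ω => ∏ i ∈ S, A i ω}
  rw [sigmaGen_prod_eq_iSup_comap]
  have hA_le : ⨆ i, MeasurableSpace.comap (A i) inferInstance ≤ ‹MeasurableSpace Ω› :=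
    iSup_le fun i => (hAmeas i).comap_le
  have hL_le : sigmaGen (Submonoid.closure L : Set (Ω → ℝ)) ≤
      ⨆ i, MeasurableSpace.comap (A i) inferInstance := by
    rw [← sigmaGen_prod_eq_iSup_comap]
    refine sigmaGen_closure_le ?_
    rintro g ⟨S, -, hg⟩
    exact measurable_of_mem_sigmaGen (by exact ⟨S, hg⟩)
  have hsum : Measurable[sigmaGen (Submonoid.closure L : Set (Ω → ℝ))]
      fun ω => ∑ S : Finset (Fin p), β S * ∏ i ∈ S, A i ω := by
    refine Finset.measurable_sum _ fun S _ => ?_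
    by_cases hS : β S = 0
    · simp only [hS, zero_mul]; exact measurable_const
    · exact (measurable_of_mem_sigmaGen
        (Submonoid.subset_closure (s := L) ⟨S, hS, rfl⟩)).const_mul _
  exact condIndepSigma_of_aestronglyMeasurable_condExp_indicator hL_le hBmeas.comap_le hA_le
    fun s => aestronglyMeasurable_condExp_indicator_of_sign hA_le hBmeas hBbin
      (hsum.aestronglyMeasurable.congr hβ.symm)

/-- **Nonzero BELIEF coefficients and conditional independence** (Theorem 5, part 1).
Let `B ∈ {-1,1}` and let `A = (A_1, …, A_p)` be a nondegenerate binary vector on the same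
probability space, with `E[B | A] = βᵀ A^⊗` almost surely.  Let
`L = {Λ ∈ G_A : β_Λ ≠ 0}` be the set of coordinates of `A^⊗` with nonzero BELIEF
coefficient and let `G_L = ⟨L⟩` be the subgroup it generates.  Then `B` is conditionally
independent of `σ(G_A)` given `σ(G_L)`. -/
theorem belief_nonzero_slopes_conditional_independence
    {Ω : Type*} [MeasurableSpace Ω] (μ : Measure Ω) [IsProbabilityMeasure μ]
    {p : ℕ} (A : Fin p → Ω → ℝ) (B : Ω → ℝ)
    (hAmeas : ∀ i, Measurable (A i)) (hBmeas : Measurable B)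
    (hAbin : ∀ i ω, A i ω = -1 ∨ A i ω = 1)
    (hBbin : ∀ ω, B ω = -1 ∨ B ω = 1)
    (hnondeg : ∀ v : Fin p → ℝ, (∀ i, v i = -1 ∨ v i = 1) →
      0 < μ {ω | ∀ i, A i ω = v i})
    (β : Finset (Fin p) → ℝ)
    (hβ : μ[B | ⨆ i, MeasurableSpace.comap (A i) inferInstance]
      =ᵐ[μ] fun ω => ∑ S : Finset (Fin p), β S * ∏ i ∈ S, A i ω) :
    CondIndepSigma μ
      -- the conditioning σ-field σ(G_L), where G_L = ⟨L⟩, L = {Λ ∈ G_A : β_Λ ≠ 0}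
      (sigmaGen (Submonoid.closure
        {g : Ω → ℝ | ∃ S : Finset (Fin p), β S ≠ 0 ∧ g = fun ω => ∏ i ∈ S, A i ω}
        : Set (Ω → ℝ)))
      -- the σ-field generated by B
      (MeasurableSpace.comap B inferInstance)
      -- the σ-field σ(G_A)
      (sigmaGen {g : Ω → ℝ | ∃ S : Finset (Fin p), g = fun ω => ∏ i ∈ S, A i ω}) :=
  belief_nonzero_slopes_conditional_independence_general μ A B hAmeas hBmeas hBbin β hβ
end

section
/- Let B_1, …, B_n ∈ {-1, 1} and A_1, …, A_n ∈ {-1, 1}^p, and suppose 𝒜ᵀ𝒜 is invertible. Then the least squares estimator β̂ = (𝒜ᵀ𝒜)^{-1} 𝒜ᵀ ℬ satisfies (1) ‖H_{2^p} β̂‖_∞ ≤ 1, (2) ‖𝒜 β̂‖_∞ ≤ 1, and (3) ‖β̂‖_2 ≤ 1. -/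
/-- The Sylvester Hadamard matrix of size `2^p`, indexed by subsets of `{1, …, p}`. -/
noncomputable def Had (p : ℕ) : Matrix (Finset (Fin p)) (Finset (Fin p)) ℝ :=
  Matrix.of fun S T => (-1 : ℝ) ^ (S ∩ T).card

/-!
Since `A_i ∈ {-1, 1}^p`, the power vector `A_i^⊗` is the row of `H = H_{2^p}` indexed by
`t_i = {j | A_ij = -1}`, i.e. `𝒜 = H.submatrix t id`. Then `𝒜 β = (H β) ∘ t`, and
`𝒜ᵀ r = Hᵀ (fibrewise sums of r over t)`; as `H` is invertible, the normal equations
`𝒜ᵀ (𝒜 β̂ - ℬ) = 0` say that `(H β̂)_T` is the average of the `B_i` with `t_i = T`.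
Invertibility of `𝒜ᵀ𝒜` makes `𝒜` injective, which forces every fibre of `t` to be nonempty,
so every entry of `H β̂` is an average of signs. Finally `Hᵀ H = 2^p • 1` gives
`2^p ‖β̂‖² = ‖H β̂‖² ≤ 2^p`.
-/

open Matrix Finset

section LeastSquares

variable {m ι R : Type*} [Fintype ι] [CommRing R]

theorem submatrix_id_mulVec (H : Matrix ι ι R) (t : m → ι) (v : ι → R) :
    H.submatrix t id *ᵥ v = (H *ᵥ v) ∘ t :=
  rfl

variable [Fintype m] [DecidableEq ι]

noncomputable def leastSquares (A : Matrix m ι R) (b : m → R) : ι → R :=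
  ((Aᵀ * A)⁻¹ * Aᵀ) *ᵥ b

theorem transpose_mulVec_mulVec_leastSquares {A : Matrix m ι R} (hA : IsUnit (Aᵀ * A))
    (b : m → R) : Aᵀ *ᵥ (A *ᵥ leastSquares A b) = Aᵀ *ᵥ b := by
  rw [leastSquares, mulVec_mulVec, mulVec_mulVec,
    mul_nonsing_inv_cancel_left _ _ ((isUnit_iff_isUnit_det _).mp hA)]

theorem mulVec_injective_of_isUnit_transpose_mul_self {A : Matrix m ι R}
    (hA : IsUnit (Aᵀ * A)) : Function.Injective A.mulVec := by
  refine Function.Injective.of_comp (f := Aᵀ.mulVec) ?_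
  convert mulVec_injective_of_isUnit hA using 1
  exact funext fun v => mulVec_mulVec v Aᵀ A

theorem transpose_submatrix_id_mulVec (H : Matrix ι ι R) (t : m → ι) (r : m → R) :
    (H.submatrix t id)ᵀ *ᵥ r = Hᵀ *ᵥ fun T => ∑ i with t i = T, r i := by
  ext S
  simp only [mulVec, dotProduct, transpose_apply, submatrix_apply, id, mul_sum]
  rw [← sum_fiberwise univ t]
  exact sum_congr rfl fun T _ => sum_congr rfl fun i hi => by rw [(mem_filter.mp hi).2]

theorem card_filter_mul_mulVec_leastSquares {H : Matrix ι ι R} (hH : IsUnit H) {t : m → ι}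
    (hA : IsUnit ((H.submatrix t id)ᵀ * H.submatrix t id)) (b : m → R) (T : ι) :
    #{i | t i = T} * (H *ᵥ leastSquares (H.submatrix t id) b) T = ∑ i with t i = T, b i := by
  have hfibres := congrFun (mulVec_injective_of_isUnit ((isUnit_transpose H).mpr hH)
    (by simpa only [submatrix_id_mulVec, transpose_submatrix_id_mulVec] using
      transpose_mulVec_mulVec_leastSquares hA b)) T
  rw [← hfibres, sum_congr rfl fun i hi => by rw [Function.comp_apply, (mem_filter.mp hi).2],
    sum_const, nsmul_eq_mul]

theorem surjective_of_isUnit_transpose_mul_submatrix [Nontrivial R] {H : Matrix ι ι R}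
    (hH : IsUnit H) {t : m → ι} (hA : IsUnit ((H.submatrix t id)ᵀ * H.submatrix t id)) :
    Function.Surjective t := by
  intro T
  by_contra hT
  push Not at hT
  have hsingle : H *ᵥ (H⁻¹ *ᵥ Pi.single T 1) = Pi.single T 1 := by
    rw [mulVec_mulVec, mul_nonsing_inv _ ((isUnit_iff_isUnit_det H).mp hH), one_mulVec]
  have hzero : H⁻¹ *ᵥ Pi.single T (1 : R) = 0 := by
    apply mulVec_injective_of_isUnit_transpose_mul_self hA
    ext i
    rw [submatrix_id_mulVec, Function.comp_apply, hsingle, mulVec_zero]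
    exact Pi.single_eq_of_ne (hT i) 1
  simpa [hzero] using congrFun hsingle T

end LeastSquares

theorem abs_le_one_of_card_mul_eq_sum {ι K : Type*} [Field K] [LinearOrder K]
    [IsStrictOrderedRing K] {s : Finset ι} (hs : s.Nonempty) {b : ι → K}
    (hb : ∀ i ∈ s, |b i| ≤ 1) {x : K} (hx : #s * x = ∑ i ∈ s, b i) : |x| ≤ 1 := by
  have hcard : (0 : K) < #s := by exact_mod_cast hs.card_pos
  refine le_of_mul_le_mul_left ?_ hcard
  calc #s * |x| = |∑ i ∈ s, b i| := by rw [← hx, abs_mul, abs_of_pos hcard]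
    _ ≤ ∑ i ∈ s, |b i| := abs_sum_le_sum_abs _ _
    _ ≤ #s * 1 := by simpa using sum_le_card_nsmul s _ 1 hb

theorem abs_mulVec_leastSquares_submatrix_le_one {m ι K : Type*} [Fintype m] [Fintype ι]
    [DecidableEq ι] [Field K] [LinearOrder K] [IsStrictOrderedRing K] {H : Matrix ι ι K}
    (hH : IsUnit H) {t : m → ι} (hA : IsUnit ((H.submatrix t id)ᵀ * H.submatrix t id))
    {b : m → K} (hb : ∀ i, |b i| ≤ 1) (T : ι) :
    |(H *ᵥ leastSquares (H.submatrix t id) b) T| ≤ 1 := by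
  obtain ⟨i, rfl⟩ := surjective_of_isUnit_transpose_mul_submatrix hH hA T
  exact abs_le_one_of_card_mul_eq_sum ⟨i, by simp⟩ (fun i _ => hb i)
    (card_filter_mul_mulVec_leastSquares hH hA b (t i))

section Hadamard

variable {ι : Type*} [Fintype ι] [DecidableEq ι]

theorem Matrix.IsHadamard.isUnit {K : Type*} [Field K] [StarRing K] [CharZero K]
    {H : Matrix ι ι K} (hH : H.IsHadamard) : IsUnit H := by
  rw [isUnit_iff_isUnit_det, isUnit_iff_ne_zero]
  intro hdet
  have hcard : (Fintype.card ι : K) ^ Fintype.card ι ≠ 0 := by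
    exact_mod_cast (Nat.pow_self_pos (n := Fintype.card ι)).ne'
  rw [← hH.det_mul_star_det, hdet, zero_mul] at hcard
  exact hcard rfl

theorem Matrix.IsHadamard.sum_sq_le_one {H : Matrix ι ι ℝ} (hH : H.IsHadamard) {v : ι → ℝ}
    (hv : ∀ T, |(H *ᵥ v) T| ≤ 1) : ∑ T, v T ^ 2 ≤ 1 := by
  have hnorm : ∑ T, (H *ᵥ v) T ^ 2 = Fintype.card ι * ∑ T, v T ^ 2 := by
    simp only [sq]
    change (H *ᵥ v) ⬝ᵥ (H *ᵥ v) = Fintype.card ι * (v ⬝ᵥ v)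
    rw [dotProduct_mulVec, ← mulVec_transpose, mulVec_mulVec,
      ← conjTranspose_eq_transpose_of_trivial, hH.conjTranspose_mul, smul_mulVec, one_mulVec,
      dotProduct_comm, dotProduct_smul, smul_eq_mul]
  have hle : ∑ T, (H *ᵥ v) T ^ 2 ≤ Fintype.card ι := by
    calc ∑ T, (H *ᵥ v) T ^ 2 ≤ ∑ _T : ι, (1 : ℝ) :=
          sum_le_sum fun T _ => (sq_le_one_iff_abs_le_one _).mpr (hv T)
      _ = Fintype.card ι := by simp
  rcases isEmpty_or_nonempty ι with _ | _
  · simp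
  · exact le_of_mul_le_mul_left (by rwa [mul_one, ← hnorm]) (by positivity)

end Hadamard

theorem Had_apply_eq_prod {p : ℕ} (S T : Finset (Fin p)) :
    Had p S T = ∏ j ∈ T, if j ∈ S then -1 else 1 := by
  rw [Had, of_apply, prod_ite, prod_const, prod_const, one_pow, mul_one, filter_mem_eq_inter,
    inter_comm]

theorem sum_Had_mul_Had (p : ℕ) (S U : Finset (Fin p)) :
    ∑ T, Had p S T * Had p U T = if S = U then 2 ^ p else 0 := by
  have hfactor : ∀ j, 1 + (if j ∈ S then -1 else 1) * (if j ∈ U then -1 else 1) =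
      if (j ∈ S ↔ j ∈ U) then (2 : ℝ) else 0 := by
    intro j
    by_cases hS : j ∈ S <;> by_cases hU : j ∈ U <;> simp [hS, hU] <;> norm_num
  simp_rw [Had_apply_eq_prod, ← prod_mul_distrib]
  rw [← powerset_univ, ← prod_one_add, prod_congr rfl fun j _ => hfactor j, prod_ite_zero]
  simp [Finset.ext_iff]

theorem isHadamard_Had (p : ℕ) : (Had p).IsHadamard := by
  refine .of_mul_conjTranspose (fun S T => ?_) ?_ (.of_ne_zero (by positivity))
  · rw [Unitary.mem_iff_eq_one_or_eq_neg_one]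
    exact neg_one_pow_eq_or ℝ _
  · ext S U
    rw [conjTranspose_eq_transpose_of_trivial, mul_apply]
    simp [sum_Had_mul_Had, one_apply, Fintype.card_finset]

theorem prod_eq_Had_apply {p : ℕ} {a : Fin p → ℝ} (ha : ∀ j, a j = -1 ∨ a j = 1)
    (S : Finset (Fin p)) : ∏ j ∈ S, a j = Had p {j | a j = -1} S := by
  rw [Had_apply_eq_prod]
  refine prod_congr rfl fun j _ => ?_
  rcases ha j with h | h <;> simp [h]

/-- **Bounds on the least squares BELIEF estimator** (Theorem 7).
Let `B_1, …, B_n ∈ {-1,1}` and `A_1, …, A_n ∈ {-1,1}^p`, let `𝒜` be the `n × 2^p` design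
matrix whose `i`-th row is the power vector `A_i^⊗`, and suppose `𝒜ᵀ𝒜` is invertible.
Then the least squares estimator `β̂ = (𝒜ᵀ𝒜)⁻¹ 𝒜ᵀ ℬ` satisfies
(1) `‖H_{2^p} β̂‖_∞ ≤ 1`, (2) `‖𝒜 β̂‖_∞ ≤ 1`, and (3) `‖β̂‖₂ ≤ 1`. -/
theorem lse_belief_bounds
    {n p : ℕ} (Bv : Fin n → ℝ) (Av : Fin n → Fin p → ℝ)
    (hB : ∀ i, Bv i = -1 ∨ Bv i = 1)
    (hA : ∀ i j, Av i j = -1 ∨ Av i j = 1) :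
    letI 𝒜 : Matrix (Fin n) (Finset (Fin p)) ℝ :=
      Matrix.of fun i S => ∏ j ∈ S, Av i j
    ∀ _ : IsUnit (𝒜.transpose * 𝒜),
      letI βhat : Finset (Fin p) → ℝ :=
        ((𝒜.transpose * 𝒜)⁻¹ * 𝒜.transpose).mulVec Bv
      (∀ S : Finset (Fin p), |(Had p).mulVec βhat S| ≤ 1) ∧
      (∀ i : Fin n, |𝒜.mulVec βhat i| ≤ 1) ∧
      (∑ S : Finset (Fin p), βhat S ^ 2 ≤ 1) := by
  intro h𝒜
  have hrows : (Matrix.of fun i S => ∏ j ∈ S, Av i j) =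
      (Had p).submatrix (fun i => ({j | Av i j = -1} : Finset (Fin p))) id :=
    Matrix.ext fun i S => prod_eq_Had_apply (hA i) S
  rw [hrows] at h𝒜 ⊢
  have hfit := abs_mulVec_leastSquares_submatrix_le_one (isHadamard_Had p).isUnit h𝒜
    (b := Bv) fun i => by rcases hB i with h | h <;> simp [h]
  exact ⟨hfit, fun i => hfit _, (isHadamard_Had p).sum_sq_le_one hfit⟩
end

section
/- Let p ≥ 2, and let g : (-1, 1) → ℝ be continuous and strictly increasing, with inverse g^{-1} defined on the range of g. For each γ ∈ ℝ^{2^p} such that every entry of H_{2^p} γ lies in the range of g, define β_γ = H_{2^p}^{-1} g^{-1}(H_{2^p} γ) (g^{-1} applied componentwise), so that β_γᵀ a^⊗ = g^{-1}(γᵀ a^⊗) for all a ∈ {-1, 1}^p. Let γ_{12} and β_{γ,12} denote the coordinates of γ and β_γ indexed by the subset {1, 2} (the A_1 A_2 interaction). If for every such γ one has γ_{12} = 0 if and only if β_{γ,12} = 0, then g is a linear function: there exist a, b ∈ ℝ with g(x) = a x + b for all x ∈ (-1, 1). -/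
open Matrix

namespace Had

open Finset

variable {p : ℕ}

theorem apply_eq_prod (S T : Finset (Fin p)) :
    Had p S T = ∏ k ∈ T, (if k ∈ S then -1 else 1) := by
  rw [prod_ite_mem, prod_const, Had, of_apply, inter_comm]

theorem apply_comm (S T : Finset (Fin p)) : Had p S T = Had p T S := by
  simp only [Had, of_apply, inter_comm]

theorem mul_self : Had p * Had p = (2 ^ p : ℝ) • 1 := by
  ext S U
  simp_rw [mul_apply, apply_comm _ U, apply_eq_prod, ← prod_mul_distrib]
  rw [← powerset_univ, ← prod_one_add, Matrix.smul_apply, one_apply]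
  by_cases h : S = U
  · subst h
    have h2 : ∀ k : Fin p, 1 + (if k ∈ S then -1 else 1) * (if k ∈ S then -1 else 1) = (2 : ℝ) := by
      intro k; split_ifs <;> norm_num
    rw [if_pos rfl, smul_eq_mul, mul_one, prod_congr rfl fun k _ => h2 k, prod_const, card_univ,
      Fintype.card_fin]
  · obtain ⟨k, hk⟩ : ∃ k, ¬(k ∈ S ↔ k ∈ U) := by simpa [Finset.ext_iff] using h
    rw [if_neg h, smul_zero]
    exact prod_eq_zero (mem_univ k) (by by_cases hS : k ∈ S <;> simp_all)

theorem mulVec_mulVec_self (v : Finset (Fin p) → ℝ) :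
    Had p *ᵥ (Had p *ᵥ v) = (2 ^ p : ℝ) • v := by
  rw [mulVec_mulVec, mul_self, smul_mulVec, one_mulVec]

theorem apply_empty (S : Finset (Fin p)) : Had p S ∅ = 1 := by
  rw [apply_eq_prod, prod_empty]

theorem apply_singleton (S : Finset (Fin p)) (i : Fin p) :
    Had p S {i} = if i ∈ S then -1 else 1 := by
  rw [apply_eq_prod, prod_singleton]

theorem apply_pair (S : Finset (Fin p)) {i j : Fin p} (hij : i ≠ j) :
    Had p S {i, j} = (if i ∈ S then -1 else 1) * (if j ∈ S then -1 else 1) := by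
  rw [apply_eq_prod, prod_pair hij]

end Had

section TwoWayTable

open Finset

variable {p : ℕ} {α β : Type*}

def twoWayTable (i j : Fin p) (a b c d : α) (T : Finset (Fin p)) : α :=
  if i ∈ T then (if j ∈ T then d else b) else (if j ∈ T then c else a)

theorem apply_twoWayTable (f : α → β) (i j : Fin p) (a b c d : α) (T : Finset (Fin p)) :
    f (twoWayTable i j a b c d T) = twoWayTable i j (f a) (f b) (f c) (f d) T := by
  unfold twoWayTable
  split_ifs <;> rfl

theorem twoWayTable_mem {s : Set α} (i j : Fin p) {a b c d : α} (ha : a ∈ s) (hb : b ∈ s)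
    (hc : c ∈ s) (hd : d ∈ s) (T : Finset (Fin p)) : twoWayTable i j a b c d T ∈ s := by
  unfold twoWayTable
  split_ifs <;> assumption

theorem twoWayTable_eq_had_mulVec {i j : Fin p} (hij : i ≠ j) (a b c d : ℝ) :
    twoWayTable i j a b c d = Had p *ᵥ (Pi.single ∅ ((a + b + c + d) / 4)
      + Pi.single {i} ((a - b + c - d) / 4) + Pi.single {j} ((a + b - c - d) / 4)
      + Pi.single {i, j} ((a - b - c + d) / 4)) := by
  funext S
  simp only [mulVec_add, mulVec_single, Pi.add_apply, Pi.smul_apply, MulOpposite.smul_eq_mul_unop,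
    MulOpposite.unop_op, col_apply, Had.apply_empty, Had.apply_singleton, Had.apply_pair _ hij,
    twoWayTable]
  split_ifs <;> ring

theorem had_mulVec_twoWayTable_pair {i j : Fin p} (hij : i ≠ j) (a b c d : ℝ) :
    (Had p *ᵥ twoWayTable i j a b c d) {i, j} = 2 ^ p * ((a - b - c + d) / 4) := by
  rw [twoWayTable_eq_had_mulVec hij, Had.mulVec_mulVec_self]
  have hi : ({i, j} : Finset (Fin p)) ≠ {i} := fun h =>
    hij.symm (mem_singleton.1 (h ▸ mem_insert_of_mem (mem_singleton_self j)))
  simp [hij, hi]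

end TwoWayTable

open Set

/-- The coefficient vector `β_γ` of the paper. -/
noncomputable def pullbackCoeffs {p : ℕ} (ginv : ℝ → ℝ) (γ : Finset (Fin p) → ℝ) :
    Finset (Fin p) → ℝ :=
  fun S => ((2 : ℝ) ^ p)⁻¹ * (Had p *ᵥ fun T => ginv ((Had p *ᵥ γ) T)) S

theorem add_eq_add_of_pullbackCoeffs_pair_eq_zero_imp {p : ℕ} {i j : Fin p} (hij : i ≠ j)
    {g ginv : ℝ → ℝ} {D : Set ℝ} (hginv : LeftInvOn ginv g D)
    (hinteraction : ∀ γ : Finset (Fin p) → ℝ, (∀ S, (Had p *ᵥ γ) S ∈ g '' D) →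
      pullbackCoeffs ginv γ {i, j} = 0 → γ {i, j} = 0)
    {x₁ x₂ x₃ x₄ : ℝ} (h₁ : x₁ ∈ D) (h₂ : x₂ ∈ D) (h₃ : x₃ ∈ D) (h₄ : x₄ ∈ D)
    (hsum : x₁ + x₂ = x₃ + x₄) :
    g x₁ + g x₂ = g x₃ + g x₄ := by
  set γ := ((2 : ℝ) ^ p)⁻¹ • (Had p *ᵥ twoWayTable i j (g x₁) (g x₃) (g x₄) (g x₂))
  have hHγ : Had p *ᵥ γ = twoWayTable i j (g x₁) (g x₃) (g x₄) (g x₂) := by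
    rw [mulVec_smul, Had.mulVec_mulVec_self, smul_smul, inv_mul_cancel₀ (by positivity), one_smul]
  have hβ : (fun T => ginv ((Had p *ᵥ γ) T)) = twoWayTable i j x₁ x₃ x₄ x₂ := by
    funext T
    rw [hHγ, apply_twoWayTable ginv, hginv h₁, hginv h₂, hginv h₃, hginv h₄]
  have hγ : γ {i, j} = (g x₁ - g x₃ - g x₄ + g x₂) / 4 := by
    simp only [γ, Pi.smul_apply, smul_eq_mul]
    rw [had_mulVec_twoWayTable_pair hij, inv_mul_cancel_left₀ (by positivity)]
  have hγ0 : γ {i, j} = 0 := by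
    refine hinteraction γ (fun S => ?_) ?_
    · rw [hHγ]
      exact twoWayTable_mem i j (mem_image_of_mem g h₁) (mem_image_of_mem g h₃)
        (mem_image_of_mem g h₄) (mem_image_of_mem g h₂) S
    · rw [pullbackCoeffs, hβ, had_mulVec_twoWayTable_pair hij,
        show x₁ - x₃ - x₄ + x₂ = 0 by linarith]
      simp
  linarith

def AdditiveOnUnitBall (ψ : ℝ → ℝ) : Prop :=
  ∀ x y, |x| < 1 → |y| < 1 → |x + y| < 1 → ψ (x + y) = ψ x + ψ y

namespace AdditiveOnUnitBall

variable {ψ : ℝ → ℝ} (hψ : AdditiveOnUnitBall ψ)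
include hψ

theorem map_zero : ψ 0 = 0 := by
  have := hψ 0 0 (by norm_num) (by norm_num) (by norm_num)
  rw [add_zero] at this
  linarith

theorem map_neg {x : ℝ} (hx : |x| < 1) : ψ (-x) = -ψ x := by
  have := hψ x (-x) hx (by rwa [abs_neg]) (by simp)
  rw [add_neg_cancel, hψ.map_zero] at this
  linarith

theorem map_nat_mul (n : ℕ) {y : ℝ} (hy : |n * y| < 1) : ψ (n * y) = n * ψ y := by
  induction n with
  | zero => simpa using hψ.map_zero
  | succ n ih =>
    have hle : ∀ m ≤ n + 1, |(m : ℝ) * y| ≤ |((n + 1 : ℕ) : ℝ) * y| := fun m hm => by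
      rw [abs_mul, abs_mul, Nat.abs_cast, Nat.abs_cast]
      gcongr
    have hny := (hle n n.le_succ).trans_lt hy
    have h1y := (hle 1 (by omega)).trans_lt hy
    rw [Nat.cast_one, one_mul] at h1y
    push_cast at hy ⊢
    rw [add_one_mul, hψ _ _ hny h1y (by rwa [← add_one_mul]), ih hny, add_one_mul]

theorem map_int_mul (m : ℤ) {y : ℝ} (hy : |m * y| < 1) : ψ (m * y) = m * ψ y := by
  obtain ⟨n, rfl | rfl⟩ := m.eq_nat_or_neg
  · exact_mod_cast hψ.map_nat_mul n hy
  · push_cast at hy ⊢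
    rw [neg_mul, abs_neg] at hy
    rw [neg_mul, hψ.map_neg hy, hψ.map_nat_mul n hy, neg_mul]

theorem map_rat_mul (q : ℚ) {x : ℝ} (hq : |(q : ℝ)| ≤ 1) (hx : |x| < 1) :
    ψ (q * x) = q * ψ x := by
  have hden : (q.den : ℝ) ≠ 0 := by positivity
  have hx' : x = q.den * (x / q.den) := by field_simp
  have hqx : (q : ℝ) * x = q.num * (x / q.den) := by rw [Rat.cast_def]; field_simp
  have hqx1 : |(q : ℝ) * x| < 1 := by
    rw [abs_mul]
    exact lt_of_le_of_lt (mul_le_of_le_one_left (abs_nonneg x) hq) hx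
  rw [hqx] at hqx1 ⊢
  rw [hψ.map_int_mul _ hqx1, Rat.cast_def]
  conv_rhs => rw [hx', hψ.map_nat_mul _ (hx' ▸ hx)]
  field_simp

theorem map_mul (hc : ContinuousOn ψ (Ioo (-1) 1)) {x t : ℝ} (hx : |x| < 1) (ht : |t| ≤ 1) :
    ψ (t * x) = t * ψ x := by
  have hmaps : MapsTo (· * x) (Icc (-1) 1) (Ioo (-1) 1) := fun t ht => by
    rw [mem_Ioo, ← abs_lt, abs_mul]
    exact lt_of_le_of_lt (mul_le_of_le_one_left (abs_nonneg x) (abs_le.2 ht)) hx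
  have hdense : Icc (-1 : ℝ) 1 ⊆ closure (Ioo (-1) 1 ∩ range ((↑) : ℚ → ℝ)) := by
    rw [← closure_Ioo (by norm_num)]
    exact closure_minimal (Rat.denseRange_cast.open_subset_closure_inter isOpen_Ioo)
      isClosed_closure
  refine EqOn.of_subset_closure ?_ (hc.comp (continuous_mul_const x).continuousOn hmaps)
    (continuous_id.mul continuous_const).continuousOn (inter_subset_left.trans Ioo_subset_Icc_self)
    hdense (abs_le.1 ht)
  rintro _ ⟨hq, q, rfl⟩
  exact hψ.map_rat_mul q (abs_le.2 (Ioo_subset_Icc_self hq)) hx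

theorem eq_mul (hc : ContinuousOn ψ (Ioo (-1) 1)) {x : ℝ} (hx : |x| < 1) :
    ψ x = 2 * ψ (1 / 2) * x := by
  rcases le_or_gt |x| (1 / 2) with hx' | hx'
  · have h := hψ.map_mul hc (x := 1 / 2) (t := 2 * x) (by norm_num)
      (by rw [abs_mul]; norm_num; linarith)
    rw [show 2 * x * (1 / 2) = x by ring] at h
    rw [h]
    ring
  · have hx0 : 0 < |x| := by linarith
    have h := hψ.map_mul hc (t := 1 / (2 * x)) hx
      (by rw [abs_div, abs_mul, div_le_one (by positivity)]; norm_num; linarith)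
    rw [show 1 / (2 * x) * x = 1 / 2 by field_simp [abs_pos.1 hx0]] at h
    rw [h]
    field_simp [abs_pos.1 hx0]

end AdditiveOnUnitBall

theorem ContinuousOn.exists_eq_mul_add_of_add_eq_add {f : ℝ → ℝ}
    (hf : ContinuousOn f (Ioo (-1) 1))
    (hJ : ∀ x₁ x₂ x₃ x₄ : ℝ, x₁ ∈ Ioo (-1) 1 → x₂ ∈ Ioo (-1) 1 → x₃ ∈ Ioo (-1) 1 →
      x₄ ∈ Ioo (-1) 1 → x₁ + x₂ = x₃ + x₄ → f x₁ + f x₂ = f x₃ + f x₄) :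
    ∃ a b : ℝ, ∀ x ∈ Ioo (-1 : ℝ) 1, f x = a * x + b := by
  set ψ := fun x => f x - f 0
  have hψ : AdditiveOnUnitBall ψ := fun x y hx hy hxy => by
    have := hJ (x + y) 0 x y (abs_lt.1 hxy) (by norm_num) (abs_lt.1 hx) (abs_lt.1 hy) (by ring)
    simp only [ψ]
    linarith
  refine ⟨2 * ψ (1 / 2), f 0, fun x hx => ?_⟩
  have := hψ.eq_mul (hf.sub continuousOn_const) (abs_lt.2 hx)
  simp only [ψ] at this ⊢
  linarith

/-- **Equivalence of interaction coefficients forces a linear link** (Theorem 10).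
Let `p ≥ 2` and let `g : (-1,1) → ℝ` be continuous and strictly increasing, with inverse
`g⁻¹` defined on the range of `g`.  For each `γ ∈ ℝ^{2^p}` such that every entry of
`H_{2^p} γ` lies in the range of `g`, define `β_γ = H_{2^p}⁻¹ g⁻¹(H_{2^p} γ)`
(componentwise, and `H_{2^p}⁻¹ = 2^{-p} H_{2^p}`), so that `β_γᵀ a^⊗ = g⁻¹(γᵀ a^⊗)` for
all `a ∈ {-1,1}^p`.  If for every such `γ` the coordinate of `γ` indexed by `{1,2}` (the
`A₁A₂` interaction) vanishes exactly when the corresponding coordinate of `β_γ` does, then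
`g` is linear: there exist `a, b ∈ ℝ` with `g(x) = a x + b` on `(-1,1)`. -/
theorem interaction_equivalence_implies_linear_link
    {p : ℕ} (hp : 2 ≤ p) (g ginv : ℝ → ℝ)
    (hcont : ContinuousOn g (Set.Ioo (-1 : ℝ) 1))
    (hginv : Set.InvOn ginv g (Set.Ioo (-1 : ℝ) 1) (g '' Set.Ioo (-1 : ℝ) 1))
    (hiff : ∀ γ : Finset (Fin p) → ℝ,
      (∀ S : Finset (Fin p), (Had p).mulVec γ S ∈ g '' Set.Ioo (-1 : ℝ) 1) →
      (γ ({⟨0, by omega⟩, ⟨1, by omega⟩} : Finset (Fin p)) = 0 ↔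
        ((2 : ℝ) ^ p)⁻¹ *
          (Had p).mulVec (fun T => ginv ((Had p).mulVec γ T))
            ({⟨0, by omega⟩, ⟨1, by omega⟩} : Finset (Fin p)) = 0)) :
    ∃ a b : ℝ, ∀ x ∈ Set.Ioo (-1 : ℝ) 1, g x = a * x + b :=
  hcont.exists_eq_mul_add_of_add_eq_add fun _ _ _ _ =>
    add_eq_add_of_pullbackCoeffs_pair_eq_zero_imp (by simp [Fin.ext_iff]) hginv.1
      fun γ hγ => (hiff γ hγ).2
end

section
/- Let B_1, …, B_n ∈ {-1, 1} and A_1, …, A_n ∈ {-1, 1}^p, and let λ > 0. The ridge estimator β̂_{rid,λ} = argmin_β ‖ℬ − 𝒜β‖_2² + λ‖β‖_2², which equals (𝒜ᵀ𝒜 + λI)^{-1} 𝒜ᵀ ℬ and always exists, satisfies ‖H_{2^p} β̂_{rid,λ}‖_∞ ≤ 1; equivalently, for every row v of H_{2^p} and r ∈ {-1, 1}, the estimated probability (1 + r vᵀ β̂_{rid,λ})/2 lies in [0, 1]. Furthermore, if v is a row of H_{2^p} such that no observation satisfies A_i^⊗ = v, then vᵀ β̂_{rid,λ} = 0, i.e.,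 the estimated probability at that cell equals 1/2. -/
open Matrix Finset

lemma had_apply_eq_prod {p : ℕ} (T S : Finset (Fin p)) :
    Had p T S = ∏ j ∈ S, if j ∈ T then (-1 : ℝ) else 1 := by
  rw [prod_ite_mem, prod_const, inter_comm]
  rfl

lemma had_mul_transpose (p : ℕ) : Had p * (Had p)ᵀ = (2 : ℝ) ^ p • 1 := by
  ext T T'
  have hprod : ∀ S, Had p T S * Had p T' S
      = ∏ j ∈ S, (if j ∈ T then (-1 : ℝ) else 1) * (if j ∈ T' then (-1 : ℝ) else 1) := by
    intro S
    rw [had_apply_eq_prod, had_apply_eq_prod, prod_mul_distrib]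
  -- `∑_S ∏_{j ∈ S} x_j = ∏_j (1 + x_j)`, and a factor vanishes at any `j` separating `T`, `T'`.
  simp only [mul_apply, transpose_apply, hprod]
  rw [← powerset_univ, ← prod_one_add, Matrix.smul_apply, one_apply]
  split_ifs with h
  · subst h
    rw [smul_eq_mul, mul_one, prod_eq_pow_card fun j _ => ?_, card_univ, Fintype.card_fin]
    split_ifs <;> norm_num
  · obtain ⟨j, hj⟩ : ∃ j, ¬(j ∈ T ↔ j ∈ T') := by
      by_contra! hc
      exact h (ext hc)
    rw [smul_zero]
    refine prod_eq_zero (mem_univ j) ?_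
    by_cases h1 : j ∈ T <;> by_cases h2 : j ∈ T' <;> simp_all

noncomputable def negSet {p : ℕ} (a : Fin p → ℝ) : Finset (Fin p) := {j | a j = -1}

lemma prod_eq_had_negSet {p : ℕ} {a : Fin p → ℝ} (ha : ∀ j, a j = -1 ∨ a j = 1)
    (S : Finset (Fin p)) : ∏ j ∈ S, a j = Had p (negSet a) S := by
  rw [had_apply_eq_prod]
  refine prod_congr rfl fun j _ => ?_
  rcases ha j with h | h <;> simp [negSet, h]

section HadamardRows

variable {ι κ R : Type*} [Fintype ι] [Fintype κ] [DecidableEq κ] [CommRing R]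

lemma mulVec_transpose_submatrix_mulVec {H : Matrix κ κ R} {c : R} (hH : H * Hᵀ = c • 1)
    (t : ι → κ) (w : ι → R) (T : κ) :
    (H *ᵥ ((H.submatrix t id)ᵀ *ᵥ w)) T = c * ∑ i with t i = T, w i := by
  have hsub : H * (H.submatrix t id)ᵀ = (H * Hᵀ).submatrix id t := rfl
  rw [mulVec_mulVec, hsub, hH, mulVec, dotProduct, sum_filter, mul_sum]
  refine sum_congr rfl fun i _ => ?_
  simp [one_apply, eq_comm]

lemma hadamard_rows_ridge_cell {H : Matrix κ κ R} {c : R} (hH : H * Hᵀ = c • 1) (t : ι → κ)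
    {b : ι → R} {β : κ → R} {lam : R}
    (hβ : ((H.submatrix t id)ᵀ * H.submatrix t id + lam • 1) *ᵥ β = (H.submatrix t id)ᵀ *ᵥ b)
    (T : κ) :
    (c * #{i | t i = T} + lam) * (H *ᵥ β) T = c * ∑ i with t i = T, b i := by
  rw [add_mulVec, smul_mulVec, one_mulVec, ← mulVec_mulVec] at hβ
  have h := congrFun (congrArg (H *ᵥ ·) hβ) T
  rw [mulVec_add, mulVec_smul, Pi.add_apply, Pi.smul_apply, mulVec_transpose_submatrix_mulVec hH,
    mulVec_transpose_submatrix_mulVec hH] at h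
  rw [← h, add_mul, mul_assoc, ← nsmul_eq_mul, ← sum_const, smul_eq_mul]
  congr 2
  exact sum_congr rfl fun i hi => by rw [← (mem_filter.mp hi).2]; rfl

end HadamardRows

section Ridge

variable {ι κ : Type*} [Fintype ι] [Fintype κ]

def ridgeLoss (A : Matrix ι κ ℝ) (b : ι → ℝ) (lam : ℝ) (β : κ → ℝ) : ℝ :=
  ∑ i, (b i - (A *ᵥ β) i) ^ 2 + lam * ∑ k, β k ^ 2

lemma ridgeLoss_eq_dotProduct (A : Matrix ι κ ℝ) (b : ι → ℝ) (lam : ℝ) (β : κ → ℝ) :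
    ridgeLoss A b lam β = (b - A *ᵥ β) ⬝ᵥ (b - A *ᵥ β) + lam * β ⬝ᵥ β := by
  simp only [ridgeLoss, dotProduct, Pi.sub_apply, sq]

variable [DecidableEq κ]

lemma isUnit_ridge (A : Matrix ι κ ℝ) {lam : ℝ} (hlam : 0 < lam) :
    IsUnit (Aᵀ * A + lam • 1) := by
  refine PosDef.isUnit (PosDef.posSemidef_add ?_ ?_)
  · simpa using posSemidef_conjTranspose_mul_self A
  · rw [smul_one_eq_diagonal]
    exact PosDef.diagonal fun _ => hlam

lemma ridge_normal_eq (A : Matrix ι κ ℝ) {lam : ℝ} (hlam : 0 < lam) (b : ι → ℝ) :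
    (Aᵀ * A + lam • 1) *ᵥ (((Aᵀ * A + lam • 1)⁻¹ * Aᵀ) *ᵥ b) = Aᵀ *ᵥ b := by
  rw [mulVec_mulVec, mul_nonsing_inv_cancel_left _ _ ((isUnit_ridge A hlam).map detMonoidHom)]

lemma ridgeLoss_add_of_normal_eq {A : Matrix ι κ ℝ} {b : ι → ℝ} {lam : ℝ} {β₀ : κ → ℝ}
    (hβ₀ : (Aᵀ * A + lam • 1) *ᵥ β₀ = Aᵀ *ᵥ b) (δ : κ → ℝ) :
    ridgeLoss A b lam (β₀ + δ)
      = ridgeLoss A b lam β₀ + (A *ᵥ δ) ⬝ᵥ (A *ᵥ δ) + lam * δ ⬝ᵥ δ := by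
  have hcross : (b - A *ᵥ β₀) ⬝ᵥ (A *ᵥ δ) = lam * β₀ ⬝ᵥ δ := by
    rw [add_mulVec, smul_mulVec, one_mulVec, ← mulVec_mulVec] at hβ₀
    rw [dotProduct_mulVec, ← mulVec_transpose, mulVec_sub, ← hβ₀, add_sub_cancel_left,
      smul_dotProduct, smul_eq_mul]
  rw [ridgeLoss_eq_dotProduct, ridgeLoss_eq_dotProduct, mulVec_add, ← sub_sub]
  generalize b - A *ᵥ β₀ = r at hcross ⊢
  generalize A *ᵥ δ = u at hcross ⊢
  simp only [sub_dotProduct, dotProduct_sub, add_dotProduct, dotProduct_add, dotProduct_comm u r,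
    dotProduct_comm δ β₀, hcross]
  ring

lemma ridgeLoss_le_of_normal_eq {A : Matrix ι κ ℝ} {b : ι → ℝ} {lam : ℝ} (hlam : 0 ≤ lam)
    {β₀ : κ → ℝ} (hβ₀ : (Aᵀ * A + lam • 1) *ᵥ β₀ = Aᵀ *ᵥ b) (β : κ → ℝ) :
    ridgeLoss A b lam β₀ ≤ ridgeLoss A b lam β := by
  have h := ridgeLoss_add_of_normal_eq hβ₀ (β - β₀)
  rw [add_sub_cancel] at h
  rw [h, add_assoc, le_add_iff_nonneg_right]
  have := dotProduct_star_self_nonneg (A *ᵥ (β - β₀))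
  have := dotProduct_star_self_nonneg (β - β₀)
  simp only [star_trivial] at *
  positivity

end Ridge

lemma abs_le_one_of_mul_eq {c k lam γ s : ℝ} (hc : 0 ≤ c) (hlam : 0 < lam) (hs : |s| ≤ k)
    (h : (c * k + lam) * γ = c * s) : |γ| ≤ 1 := by
  have hk : 0 ≤ k := (abs_nonneg s).trans hs
  have hpos : 0 < c * k + lam := by positivity
  have : (c * k + lam) * |γ| = c * |s| := by
    rw [← abs_of_pos hpos, ← abs_mul, h, abs_mul, abs_of_nonneg hc]
  nlinarith [mul_le_mul_of_nonneg_left hs hc]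

/-- **Validity of ridge-regularized BELIEF** (Theorem 15).
Let `B_1, …, B_n ∈ {-1,1}` and `A_1, …, A_n ∈ {-1,1}^p`, let `𝒜` be the design matrix of
power vectors, and let `λ > 0`.  The ridge estimator
`β̂ = argmin_β ‖ℬ − 𝒜β‖₂² + λ‖β‖₂²`, which equals `(𝒜ᵀ𝒜 + λI)⁻¹ 𝒜ᵀ ℬ` and always
exists, satisfies `‖H_{2^p} β̂‖_∞ ≤ 1`; equivalently, for every row `v` of `H_{2^p}` and
`r ∈ {-1,1}`, the estimated probability `(1 + r vᵀ β̂)/2` lies in `[0,1]`.  Furthermore, if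
`v` is a row of `H_{2^p}` such that no observation satisfies `A_i^⊗ = v`, then
`vᵀ β̂ = 0`, i.e. the estimated probability at that cell equals `1/2`. -/
theorem ridge_belief_valid_probabilities
    {n p : ℕ} (Bv : Fin n → ℝ) (Av : Fin n → Fin p → ℝ)
    (hB : ∀ i, Bv i = -1 ∨ Bv i = 1)
    (hA : ∀ i j, Av i j = -1 ∨ Av i j = 1)
    (lam : ℝ) (hlam : 0 < lam) :
    letI 𝒜 : Matrix (Fin n) (Finset (Fin p)) ℝ :=
      Matrix.of fun i S => ∏ j ∈ S, Av i j
    letI βr : Finset (Fin p) → ℝ :=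
      ((𝒜.transpose * 𝒜 + lam • (1 : Matrix (Finset (Fin p)) (Finset (Fin p)) ℝ))⁻¹
        * 𝒜.transpose).mulVec Bv
    -- the ridge estimator always exists
    (IsUnit (𝒜.transpose * 𝒜 + lam • (1 : Matrix (Finset (Fin p)) (Finset (Fin p)) ℝ))) ∧
    -- and is the minimizer of the ridge objective
    (∀ β : Finset (Fin p) → ℝ,
      (∑ i : Fin n, (Bv i - 𝒜.mulVec βr i) ^ 2) + lam * ∑ S : Finset (Fin p), βr S ^ 2
        ≤ (∑ i : Fin n, (Bv i - 𝒜.mulVec β i) ^ 2)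
            + lam * ∑ S : Finset (Fin p), β S ^ 2) ∧
    -- ‖H β̂‖_∞ ≤ 1
    (∀ T : Finset (Fin p), |(Had p).mulVec βr T| ≤ 1) ∧
    -- equivalently, all estimated cell probabilities lie in [0,1]
    (∀ T : Finset (Fin p), ∀ r : ℝ, r = -1 ∨ r = 1 →
      (1 + r * (Had p).mulVec βr T) / 2 ∈ Set.Icc (0 : ℝ) 1) ∧
    -- empty cells receive estimated probability 1/2
    (∀ T : Finset (Fin p),
      (∀ i : Fin n, (fun S => ∏ j ∈ S, Av i j) ≠ fun S => Had p T S) →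
      (Had p).mulVec βr T = 0) := by
  set t : Fin n → Finset (Fin p) := fun i => negSet (Av i)
  have hrows : (Matrix.of fun i S => ∏ j ∈ S, Av i j) = (Had p).submatrix t id := by
    ext i S
    exact prod_eq_had_negSet (hA i) S
  rw [hrows]
  set A := (Had p).submatrix t id
  set βr := ((Aᵀ * A + lam • 1)⁻¹ * Aᵀ) *ᵥ Bv
  have hnormal : (Aᵀ * A + lam • 1) *ᵥ βr = Aᵀ *ᵥ Bv := ridge_normal_eq A hlam Bv
  have hcell := hadamard_rows_ridge_cell (had_mul_transpose p) t hnormal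
  have hsum (s : Finset (Fin n)) : |∑ i ∈ s, Bv i| ≤ #s := by
    refine (abs_sum_le_sum_abs _ _).trans ?_
    simpa using sum_le_card_nsmul s (fun i => |Bv i|) 1 fun i _ => by
      rcases hB i with h | h <;> simp [h]
  have habs (T : Finset (Fin p)) : |(Had p *ᵥ βr) T| ≤ 1 :=
    abs_le_one_of_mul_eq (by positivity) hlam (hsum _) (hcell T)
  refine ⟨isUnit_ridge A hlam, ridgeLoss_le_of_normal_eq hlam.le hnormal, habs, ?_, ?_⟩
  · intro T r hr
    have := abs_le.mp (habs T)
    rcases hr with rfl | rfl <;> constructor <;> linarith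
  · intro T hT
    have hempty : ({i | t i = T} : Finset (Fin n)) = ∅ :=
      filter_eq_empty_iff.mpr fun i _ hi => hT i (funext fun S => by
        rw [← hi]
        exact prod_eq_had_negSet (hA i) S)
    simpa [hempty, hlam.ne'] using hcell T
end
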